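/- arXiv:2512.05889 — 5 statements merged into one kernel-verified Lean document; each statement's English description precedes it below -/
import Mathlib

section
/- Let t₀ ∈ ℝ, ν > 0, D ≥ 0, I₀ > 0, let β : [0,∞) → [0,1] be continuous, and let p : [0,∞) → [0,∞) be integrable with ∫₀^∞ p(a) da = 1. For κ > 0 define Λ_κ(t) = I₀ e^{−(ν+D)(t−t₀)} ∫₀^∞ β(a+(t−t₀)) κ p(κ a) da. Then lim_{κ→∞} sup_{t ≥ t₀} | Λ_κ(t) − I₀ e^{−(ν+D)(t−t₀)} β(t−t₀) | = 0, i.e. Λ_κ converges to t ↦ I₀ e^{−(ν+D)(t−t₀)} β(t−t₀) uniformly on [t₀,∞). -/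
open MeasureTheory Set Filter Real Topology

set_option maxHeartbeats 1600000 in
/-- With `Λ_κ(t) = I₀ e^{−(ν+D)(t−t₀)} ∫₀^∞ β(a+(t−t₀)) κ p(κ a) da`,
`Λ_κ` converges to `t ↦ I₀ e^{−(ν+D)(t−t₀)} β(t−t₀)` uniformly on `[t₀, ∞)` as `κ → ∞`. -/
theorem lambda_kappa_uniform_limit
    (t₀ ν D I₀ : ℝ) (hν : 0 < ν) (hD : 0 ≤ D) (hI₀ : 0 < I₀)
    (β : ℝ → ℝ) (hβ_cont : ContinuousOn β (Ici 0))
    (hβ_mem : ∀ a, 0 ≤ a → β a ∈ Icc (0 : ℝ) 1)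
    (p : ℝ → ℝ) (hp_nonneg : ∀ a, 0 ≤ a → 0 ≤ p a)
    (hp_int : IntegrableOn p (Ioi 0))
    (hp_one : ∫ a in Ioi (0 : ℝ), p a = 1) :
    TendstoUniformlyOn
      (fun (κ : ℝ) (t : ℝ) =>
        I₀ * Real.exp (-(ν + D) * (t - t₀)) *
          ∫ a in Ioi (0 : ℝ), β (a + (t - t₀)) * (κ * p (κ * a)))
      (fun t => I₀ * Real.exp (-(ν + D) * (t - t₀)) * β (t - t₀))
      atTop (Ici t₀) := by
  have hβ0 : ∀ a, 0 ≤ a → 0 ≤ β a := fun a ha => (hβ_mem a ha).1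
  have hβ1 : ∀ a, 0 ≤ a → β a ≤ 1 := fun a ha => (hβ_mem a ha).2
  have hνD : 0 < ν + D := by linarith
  -- tail of p tends to 0
  have htail : Tendsto (fun x => ∫ a in Ioi x, p a) atTop (𝓝 0) := by
    have h1 : Tendsto (fun x : ℝ => ∫ a in (0:ℝ)..x, p a) atTop
        (𝓝 (∫ a in Ioi (0:ℝ), p a)) :=
      intervalIntegral_tendsto_integral_Ioi 0 hp_int tendsto_id
    have h2 : Tendsto (fun x : ℝ => 1 - ∫ a in (0:ℝ)..x, p a) atTop (𝓝 0) := by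
      rw [hp_one] at h1
      have := ((tendsto_const_nhds : Tendsto (fun _ : ℝ => (1:ℝ)) atTop (𝓝 1)).sub h1)
      simpa using this
    refine h2.congr' ?_
    filter_upwards [eventually_ge_atTop (0:ℝ)] with x hx
    have hsplit : ∫ a in Ioi (0:ℝ), p a
        = (∫ a in Ioc (0:ℝ) x, p a) + ∫ a in Ioi x, p a := by
      rw [← setIntegral_union Ioc_disjoint_Ioi_same measurableSet_Ioi
        (hp_int.mono_set Ioc_subset_Ioi_self) (hp_int.mono_set (Ioi_subset_Ioi hx)),
        Ioc_union_Ioi_eq_Ioi hx]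
    rw [intervalIntegral.integral_of_le hx]
    rw [hp_one] at hsplit
    linarith
  rw [Metric.tendstoUniformlyOn_iff]
  intro ε hε
  set ε₁ := ε / (4 * I₀) with hε₁def
  have hε₁ : 0 < ε₁ := div_pos hε (by linarith)
  clear_value ε₁
  -- choose T
  have hTexp : Tendsto (fun s : ℝ => 2 * I₀ * Real.exp (-(ν + D) * s)) atTop (𝓝 0) := by
    have h1 : Tendsto (fun s : ℝ => -(ν + D) * s) atTop atBot :=
      (tendsto_const_mul_atBot_of_neg (by linarith)).2 tendsto_id
    have := (Real.tendsto_exp_atBot.comp h1).const_mul (2 * I₀)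
    simpa using this
  obtain ⟨T, hT⟩ := (eventually_atTop.1
    ((hTexp.eventually (gt_mem_nhds hε)).and (eventually_ge_atTop 0)))
  have hT0 : 0 ≤ T := (hT T le_rfl).2
  -- uniform continuity of β on [0, T+2]
  have hUC : UniformContinuousOn β (Icc 0 (T + 2)) :=
    (isCompact_Icc).uniformContinuousOn_of_continuous
      (hβ_cont.mono (Icc_subset_Ici_self))
  rw [Metric.uniformContinuousOn_iff] at hUC
  obtain ⟨δ, hδpos, hδ⟩ := hUC ε₁ hε₁
  set δ' := min (δ / 2) 1 with hδ'def
  have hδ'pos : 0 < δ' := lt_min (by linarith) one_pos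
  have hδ'le1 : δ' ≤ 1 := min_le_right _ _
  have hδ'ltδ : δ' < δ := lt_of_le_of_lt (min_le_left _ _) (by linarith)
  clear_value δ'
  -- choose M for tail
  obtain ⟨M, hM⟩ := (Metric.tendsto_atTop.1 htail) ε₁ hε₁
  filter_upwards [eventually_ge_atTop (max 1 (M / δ'))] with κ hκ
  have hκ1 : (1:ℝ) ≤ κ := le_trans (le_max_left _ _) hκ
  have hκpos : 0 < κ := lt_of_lt_of_le one_pos hκ1
  have hκδ' : M ≤ κ * δ' := by
    have := le_trans (le_max_right 1 (M / δ')) hκ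
    calc M = M / δ' * δ' := by field_simp
    _ ≤ κ * δ' := by nlinarith
  intro t ht
  set s := t - t₀ with hsdef
  have hs0 : 0 ≤ s := by simp only [hsdef]; linarith [mem_Ici.1 ht]
  clear_value s
  -- basic facts about q a = κ * p (κ * a)
  have hq_nonneg : ∀ a ∈ Ioi (0:ℝ), 0 ≤ κ * p (κ * a) := fun a ha =>
    mul_nonneg hκpos.le (hp_nonneg _ (mul_nonneg hκpos.le (le_of_lt ha)))
  have hq_int : IntegrableOn (fun a => κ * p (κ * a)) (Ioi 0) := by
    refine Integrable.const_mul ?_ κ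
    have := (integrableOn_Ioi_comp_mul_left_iff p 0 hκpos).2
    have h : IntegrableOn (fun a => p (κ * a)) (Ioi 0) := by simpa using this (by simpa using hp_int)
    exact h
  have hq_one : ∫ a in Ioi (0:ℝ), κ * p (κ * a) = 1 := by
    rw [integral_const_mul, integral_comp_mul_left_Ioi p 0 hκpos]
    simp [smul_eq_mul, mul_zero, hp_one]
    field_simp
  have hq_tail : ∫ a in Ioi δ', κ * p (κ * a) = ∫ a in Ioi (κ * δ'), p a := by
    rw [integral_const_mul, integral_comp_mul_left_Ioi p δ' hκpos, smul_eq_mul]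
    field_simp
  -- measurability/integrability of the shifted β times q
  have hβs_meas : AEStronglyMeasurable (fun a => β (a + s)) (volume.restrict (Ioi 0)) := by
    refine ContinuousOn.aestronglyMeasurable ?_ measurableSet_Ioi
    refine hβ_cont.comp ((continuous_id.add continuous_const).continuousOn) ?_
    intro a ha
    exact mem_Ici.2 (by have := mem_Ioi.1 ha; dsimp; linarith)
  have hβs_bdd : ∀ᵐ a ∂(volume.restrict (Ioi (0:ℝ))), ‖β (a + s)‖ ≤ 1 := by
    refine (ae_restrict_iff' measurableSet_Ioi).2 (ae_of_all _ fun a ha => ?_)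
    have h0 : 0 ≤ a + s := by have := mem_Ioi.1 ha; linarith
    rw [Real.norm_eq_abs, abs_le]
    exact ⟨by linarith [hβ0 _ h0], hβ1 _ h0⟩
  have hint : IntegrableOn (fun a => β (a + s) * (κ * p (κ * a))) (Ioi 0) :=
    Integrable.bdd_mul hq_int hβs_meas hβs_bdd
  set F := ∫ a in Ioi (0:ℝ), β (a + s) * (κ * p (κ * a)) with hFdef
  have hF0 : 0 ≤ F :=
    setIntegral_nonneg measurableSet_Ioi fun a ha =>
      mul_nonneg (hβ0 _ (by have := mem_Ioi.1 ha; linarith)) (hq_nonneg a ha)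
  have hF1 : F ≤ 1 := by
    rw [hFdef, ← hq_one]
    refine setIntegral_mono_on hint hq_int measurableSet_Ioi fun a ha => ?_
    exact mul_le_of_le_one_left (hq_nonneg a ha)
      (hβ1 _ (by have := mem_Ioi.1 ha; linarith))
  clear_value F
  have hexp_le1 : Real.exp (-(ν + D) * s) ≤ 1 := by
    rw [Real.exp_le_one_iff]
    nlinarith
  have hβs_mem : β s ∈ Icc (0:ℝ) 1 := hβ_mem s hs0
  have key : dist (I₀ * Real.exp (-(ν + D) * s) * β s)
      (I₀ * Real.exp (-(ν + D) * s) * F) < ε := by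
    rw [Real.dist_eq, ← mul_sub, abs_mul, abs_of_pos
      (mul_pos hI₀ (Real.exp_pos _))]
    by_cases hsT : s ≤ T
    · -- main estimate
      have hdiff : β s - F = ∫ a in Ioi (0:ℝ),
          (β s - β (a + s)) * (κ * p (κ * a)) := by
        have h2 : (∫ a in Ioi (0:ℝ), (β s - β (a + s)) * (κ * p (κ * a)))
            = (∫ a in Ioi (0:ℝ), β s * (κ * p (κ * a)))
              - ∫ a in Ioi (0:ℝ), β (a + s) * (κ * p (κ * a)) := by
          rw [← integral_sub (hq_int.const_mul (β s)) hint]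
          congr 1; ext a; ring
        rw [h2, integral_const_mul, hq_one, mul_one, hFdef]
      have hnorm : |β s - F| ≤ ∫ a in Ioi (0:ℝ),
          ‖(β s - β (a + s)) * (κ * p (κ * a))‖ := by
        rw [hdiff, ← Real.norm_eq_abs]
        exact norm_integral_le_integral_norm _
      have hdint : IntegrableOn (fun a => ‖(β s - β (a + s)) * (κ * p (κ * a))‖) (Ioi 0) := by
        refine Integrable.norm ?_
        have h2 : IntegrableOn (fun a => β s * (κ * p (κ * a))) (Ioi 0) :=
          hq_int.const_mul (β s)
        exact (h2.sub hint).congr (ae_of_all _ fun a => by simp only [Pi.sub_apply]; ring)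
      have hsplit : (∫ a in Ioi (0:ℝ), ‖(β s - β (a + s)) * (κ * p (κ * a))‖)
          = (∫ a in Ioc (0:ℝ) δ', ‖(β s - β (a + s)) * (κ * p (κ * a))‖)
            + ∫ a in Ioi δ', ‖(β s - β (a + s)) * (κ * p (κ * a))‖ := by
        rw [← setIntegral_union Ioc_disjoint_Ioi_same measurableSet_Ioi
          (hdint.mono_set Ioc_subset_Ioi_self)
          (hdint.mono_set (Ioi_subset_Ioi hδ'pos.le)),
          Ioc_union_Ioi_eq_Ioi hδ'pos.le]
      have hpiece1 : (∫ a in Ioc (0:ℝ) δ', ‖(β s - β (a + s)) * (κ * p (κ * a))‖)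
          ≤ ε₁ := by
        have hmono : (∫ a in Ioc (0:ℝ) δ', ‖(β s - β (a + s)) * (κ * p (κ * a))‖)
            ≤ ∫ a in Ioc (0:ℝ) δ', ε₁ * (κ * p (κ * a)) := by
          refine setIntegral_mono_on (hdint.mono_set Ioc_subset_Ioi_self)
            ((hq_int.mono_set Ioc_subset_Ioi_self).const_mul ε₁)
            measurableSet_Ioc fun a ha => ?_
          obtain ⟨ha0, haδ⟩ := ha
          have hq : 0 ≤ κ * p (κ * a) := hq_nonneg a ha0
          rw [norm_mul, Real.norm_eq_abs, Real.norm_eq_abs, abs_of_nonneg hq]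
          refine mul_le_mul_of_nonneg_right ?_ hq
          have h1 : s ∈ Icc (0:ℝ) (T + 2) := ⟨hs0, by linarith⟩
          have h2 : a + s ∈ Icc (0:ℝ) (T + 2) := ⟨by linarith, by
            have : a ≤ 1 := le_trans haδ hδ'le1; linarith⟩
          have := hδ s h1 (a + s) h2 (by
            rw [Real.dist_eq]
            have : |s - (a + s)| = a := by rw [abs_of_nonpos (by linarith)]; ring
            rw [this]; exact lt_of_le_of_lt haδ hδ'ltδ)
          rw [Real.dist_eq] at this
          exact this.le
        refine le_trans hmono ?_
        rw [integral_const_mul]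
        have : (∫ a in Ioc (0:ℝ) δ', κ * p (κ * a)) ≤ 1 := by
          rw [← hq_one]
          refine setIntegral_mono_set hq_int ?_ (HasSubset.Subset.eventuallyLE Ioc_subset_Ioi_self)
          exact (ae_restrict_iff' measurableSet_Ioi).2 (ae_of_all _ hq_nonneg)
        nlinarith
      have hpiece2 : (∫ a in Ioi δ', ‖(β s - β (a + s)) * (κ * p (κ * a))‖)
          ≤ 2 * ε₁ := by
        have hmono : (∫ a in Ioi δ', ‖(β s - β (a + s)) * (κ * p (κ * a))‖)
            ≤ ∫ a in Ioi δ', 2 * (κ * p (κ * a)) := by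
          refine setIntegral_mono_on (hdint.mono_set (Ioi_subset_Ioi hδ'pos.le))
            ((hq_int.mono_set (Ioi_subset_Ioi hδ'pos.le)).const_mul 2)
            measurableSet_Ioi fun a ha => ?_
          have ha0 : 0 < a := lt_trans hδ'pos (mem_Ioi.1 ha)
          have hq : 0 ≤ κ * p (κ * a) := hq_nonneg a ha0
          rw [norm_mul, Real.norm_eq_abs, Real.norm_eq_abs, abs_of_nonneg hq]
          refine mul_le_mul_of_nonneg_right ?_ hq
          have h1 := hβ_mem s hs0
          have h2 := hβ_mem (a + s) (by linarith)
          rw [abs_le]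
          constructor <;> [linarith [h1.1, h2.2]; linarith [h1.2, h2.1]]
        refine le_trans hmono ?_
        rw [integral_const_mul, hq_tail]
        have := hM (κ * δ') hκδ'
        rw [Real.dist_eq, sub_zero] at this
        have h2 := le_abs_self (∫ a in Ioi (κ * δ'), p a)
        nlinarith
      have hfinal : |β s - F| ≤ 3 * ε₁ := by
        calc |β s - F| ≤ _ := hnorm
        _ = _ := hsplit
        _ ≤ ε₁ + 2 * ε₁ := add_le_add hpiece1 hpiece2
        _ = 3 * ε₁ := by ring
      have h3 : I₀ * Real.exp (-(ν + D) * s) * |β s - F|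
          ≤ I₀ * (3 * ε₁) := by
        have h4 : I₀ * Real.exp (-(ν + D) * s) ≤ I₀ * 1 :=
          mul_le_mul_of_nonneg_left hexp_le1 hI₀.le
        calc I₀ * Real.exp (-(ν + D) * s) * |β s - F|
            ≤ (I₀ * 1) * (3 * ε₁) :=
              mul_le_mul h4 hfinal (abs_nonneg _) (by positivity)
        _ = I₀ * (3 * ε₁) := by ring
      have hval : I₀ * (3 * ε₁) = 3 / 4 * ε := by
        rw [hε₁def]; field_simp
      linarith
    · -- tail in s
      push_neg at hsT
      have h1 : |β s - F| ≤ 2 := by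
        rw [abs_le]
        constructor <;> [linarith [hβs_mem.1, hF1]; linarith [hβs_mem.2, hF0]]
      have h2 : Real.exp (-(ν + D) * s) ≤ Real.exp (-(ν + D) * T) := by
        apply Real.exp_le_exp.2
        nlinarith
      have h3 := (hT s (le_of_lt hsT)).1
      nlinarith [Real.exp_pos (-(ν + D) * s), abs_nonneg (β s - F),
        mul_le_mul_of_nonneg_left h1 (mul_pos hI₀ (Real.exp_pos (-(ν + D) * s))).le]
  exact key
end

section
/- Let t₀ ∈ ℝ, ν > 0, D ≥ 0, let β : [0,∞) → [0,1] be continuous, let p : [0,∞) → [0,∞) be integrable with ∫₀^∞ p(a) da = 1, and fix a_j ≥ 0 and I₀^j ≥ 0. For κ > 0 define Λ_κ^j(t) = I₀^j e^{−(ν+D)(t−t₀)} ∫_{a_j}^∞ β(a+(t−t₀)) κ p(κ(a−a_j)) da. Then lim_{κ→∞} sup_{t ≥ t₀} | Λ_κ^j(t) − I₀^j e^{−(ν+D)(t−t₀)} β(a_j+(t−t₀)) | = 0. -/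
open MeasureTheory Set Filter Real Topology

set_option maxHeartbeats 1000000

/-- With `Λ_κ^j(t) = I₀^j e^{−(ν+D)(t−t₀)} ∫_{a_j}^∞ β(a+(t−t₀)) κ p(κ(a−a_j)) da`,
`Λ_κ^j` converges to `t ↦ I₀^j e^{−(ν+D)(t−t₀)} β(a_j+(t−t₀))` uniformly on `[t₀, ∞)`
as `κ → ∞`. -/
theorem lambda_kappa_cohort_uniform_limit
    (t₀ ν D : ℝ) (hν : 0 < ν) (hD : 0 ≤ D)
    (β : ℝ → ℝ) (hβ_cont : ContinuousOn β (Ici 0))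
    (hβ_mem : ∀ a, 0 ≤ a → β a ∈ Icc (0 : ℝ) 1)
    (p : ℝ → ℝ) (hp_nonneg : ∀ a, 0 ≤ a → 0 ≤ p a)
    (hp_int : IntegrableOn p (Ioi 0))
    (hp_one : ∫ a in Ioi (0 : ℝ), p a = 1)
    (aj I₀j : ℝ) (haj : 0 ≤ aj) (hI₀j : 0 ≤ I₀j) :
    TendstoUniformlyOn
      (fun (κ : ℝ) (t : ℝ) =>
        I₀j * Real.exp (-(ν + D) * (t - t₀)) *
          ∫ a in Ioi aj, β (a + (t - t₀)) * (κ * p (κ * (a - aj))))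
      (fun t => I₀j * Real.exp (-(ν + D) * (t - t₀)) * β (aj + (t - t₀)))
      atTop (Ici t₀) := by
  have hc0 : 0 < ν + D := by linarith
  rw [Metric.tendstoUniformlyOn_iff]
  intro ε hε
  -- choose S with the exponential tail small
  have hexp : Tendsto (fun S : ℝ => I₀j * Real.exp (-(ν + D) * S) * 2) atTop (𝓝 0) := by
    have h1 : Tendsto (fun S : ℝ => Real.exp (-((ν + D) * S))) atTop (𝓝 0) :=
      Real.tendsto_exp_neg_atTop_nhds_zero.comp (tendsto_id.const_mul_atTop hc0)
    have h2 : Tendsto (fun S : ℝ => I₀j * Real.exp (-((ν + D) * S)) * 2) atTop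
        (𝓝 (I₀j * 0 * 2)) := (h1.const_mul I₀j).mul_const 2
    rw [show I₀j * 0 * 2 = (0 : ℝ) by ring] at h2
    exact h2.congr fun S => by rw [neg_mul]
  obtain ⟨S, hSε, hS0⟩ :=
    ((hexp.eventually (gt_mem_nhds hε)).and (eventually_ge_atTop (0 : ℝ))).exists
  set ε₁ : ℝ := ε / (4 * (I₀j + 1)) with hε₁def
  have hε₁ : 0 < ε₁ := by positivity
  -- splitting of the integral over Ioi 0
  have hsplit : ∀ M : ℝ, 0 ≤ M → ∀ f : ℝ → ℝ, IntegrableOn f (Ioi 0) →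
      (∫ u in Ioi (0 : ℝ), f u) = (∫ u in Ioc (0 : ℝ) M, f u) + ∫ u in Ioi M, f u := by
    intro M hM f hf
    rw [← setIntegral_union (Ioc_disjoint_Ioi le_rfl) measurableSet_Ioi
        (hf.mono_set Ioc_subset_Ioi_self) (hf.mono_set (Ioi_subset_Ioi hM)),
      Ioc_union_Ioi_eq_Ioi hM]
  -- choose M with the p-tail small
  have htail : Tendsto (fun M : ℝ => ∫ u in Ioi M, p u) atTop (𝓝 0) := by
    have h1 : Tendsto (fun M : ℝ => ∫ u in (0 : ℝ)..M, p u) atTop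
        (𝓝 (∫ u in Ioi (0 : ℝ), p u)) :=
      intervalIntegral_tendsto_integral_Ioi 0 hp_int tendsto_id
    have h2 : Tendsto (fun M : ℝ =>
        (∫ u in Ioi (0 : ℝ), p u) - ∫ u in (0 : ℝ)..M, p u) atTop
        (𝓝 ((∫ u in Ioi (0 : ℝ), p u) - ∫ u in Ioi (0 : ℝ), p u)) :=
      tendsto_const_nhds.sub h1
    rw [sub_self] at h2
    apply h2.congr'
    filter_upwards [eventually_ge_atTop (0 : ℝ)] with M hM
    rw [intervalIntegral.integral_of_le hM, hsplit M hM p hp_int]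
    ring
  obtain ⟨M, hMε, hM1⟩ :=
    ((htail.eventually (gt_mem_nhds hε₁)).and (eventually_ge_atTop (1 : ℝ))).exists
  have hM0 : (0 : ℝ) ≤ M := by linarith
  -- uniform continuity of β on a compact interval
  set R : ℝ := aj + S + 1 with hRdef
  have hUC : UniformContinuousOn β (Icc 0 R) :=
    isCompact_Icc.uniformContinuousOn_of_continuous (hβ_cont.mono Icc_subset_Ici_self)
  rw [Metric.uniformContinuousOn_iff_le] at hUC
  obtain ⟨δ₀, hδ₀, hδ⟩ := hUC ε₁ hε₁
  set δ : ℝ := min δ₀ 1 with hδdef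
  have hδpos : 0 < δ := lt_min hδ₀ one_pos
  have hδ1 : δ ≤ 1 := min_le_right _ _
  filter_upwards [eventually_ge_atTop (max (2 * M / δ) 1)] with κ hκ
  intro t ht
  have hκ1 : (1 : ℝ) ≤ κ := le_trans (le_max_right _ _) hκ
  have hκ0 : (0 : ℝ) < κ := lt_of_lt_of_le one_pos hκ1
  set s : ℝ := t - t₀ with hsdef
  have hs0 : 0 ≤ s := sub_nonneg.2 ht
  -- the shifted argument is nonnegative
  have hmapsTo : ∀ u ∈ Ioi (0 : ℝ), (0 : ℝ) ≤ aj + u / κ + s := by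
    intro u hu
    have hu0 : (0 : ℝ) ≤ u := le_of_lt hu
    positivity
  -- change of variables
  have himg : (fun u : ℝ => aj + u / κ) '' Ioi 0 = Ioi aj := by
    ext a
    constructor
    · rintro ⟨u, hu, rfl⟩
      have : 0 < u / κ := div_pos hu hκ0
      simpa using this
    · intro ha
      refine ⟨κ * (a - aj), mul_pos hκ0 (sub_pos.2 ha), ?_⟩
      field_simp
      ring
  have hderiv : ∀ x ∈ Ioi (0 : ℝ),
      HasDerivWithinAt (fun u : ℝ => aj + u / κ) ((fun _ : ℝ => κ⁻¹) x) (Ioi 0) x := by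
    intro x _
    simpa [one_div] using (((hasDerivAt_id x).div_const κ).const_add aj).hasDerivWithinAt
  have hinj : InjOn (fun u : ℝ => aj + u / κ) (Ioi 0) := by
    intro x _ y _ h
    have h' : x / κ = y / κ := by dsimp at h; linarith
    field_simp at h'
    exact h'
  have hCoV : (∫ a in Ioi aj, β (a + s) * (κ * p (κ * (a - aj))))
      = ∫ u in Ioi (0 : ℝ), β (aj + u / κ + s) * p u := by
    rw [← himg, integral_image_eq_integral_abs_deriv_smul measurableSet_Ioi hderiv hinj
      (fun a => β (a + s) * (κ * p (κ * (a - aj))))]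
    apply setIntegral_congr_fun measurableSet_Ioi
    intro u hu
    have h1 : κ * (aj + u / κ - aj) = u := by field_simp; ring
    have h2 : |κ⁻¹| = κ⁻¹ := abs_of_pos (by positivity)
    simp only [h1, h2, smul_eq_mul]
    field_simp
  -- measurability and integrability
  have hβmeas : AEStronglyMeasurable (fun u : ℝ => β (aj + u / κ + s))
      (volume.restrict (Ioi 0)) := by
    apply ContinuousOn.aestronglyMeasurable _ measurableSet_Ioi
    apply hβ_cont.comp
      ((continuous_const.add (continuous_id.div_const κ)).add continuous_const).continuousOn
    intro u hu
    exact hmapsTo u hu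
  have hbound : ∀ u ∈ Ioi (0 : ℝ), |β (aj + u / κ + s)| ≤ 1 := by
    intro u hu
    have h := hβ_mem _ (hmapsTo u hu)
    rw [abs_le]
    exact ⟨by linarith [h.1], h.2⟩
  have hint1 : IntegrableOn (fun u : ℝ => β (aj + u / κ + s) * p u) (Ioi 0) := by
    apply Integrable.mono' hp_int (hβmeas.mul hp_int.aestronglyMeasurable)
    rw [ae_restrict_iff' measurableSet_Ioi]
    refine ae_of_all _ fun u hu => ?_
    have hpu : 0 ≤ p u := hp_nonneg u hu.le
    calc ‖β (aj + u / κ + s) * p u‖ = |β (aj + u / κ + s)| * |p u| := abs_mul _ _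
      _ ≤ 1 * p u := by
          rw [abs_of_nonneg hpu]
          exact mul_le_mul_of_nonneg_right (hbound u hu) hpu
      _ = p u := one_mul _
  have hintc : IntegrableOn (fun u : ℝ => β (aj + s) * p u) (Ioi 0) := hp_int.const_mul _
  set g : ℝ → ℝ := fun u => (β (aj + u / κ + s) - β (aj + s)) * p u with hgdef
  have hintg : IntegrableOn g (Ioi 0) := by
    have : g = fun u => β (aj + u / κ + s) * p u - β (aj + s) * p u := by
      funext u; simp [hgdef]; ring
    rw [this]
    exact hint1.sub hintc
  have hg2 : ∀ u ∈ Ioi (0 : ℝ), |g u| ≤ 2 * p u := by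
    intro u hu
    have hpu : 0 ≤ p u := hp_nonneg u hu.le
    have h1 := hbound u hu
    have h2 := hβ_mem (aj + s) (by positivity)
    have h3 : |β (aj + u / κ + s) - β (aj + s)| ≤ 2 := by
      rw [abs_le] at h1 ⊢
      constructor <;> [linarith [h1.1, h2.2]; linarith [h1.2, h2.1]]
    calc |g u| = |β (aj + u / κ + s) - β (aj + s)| * |p u| := abs_mul _ _
      _ ≤ 2 * p u := by
          rw [abs_of_nonneg hpu]
          exact mul_le_mul_of_nonneg_right h3 hpu
  have hint2p : IntegrableOn (fun u : ℝ => 2 * p u) (Ioi 0) := hp_int.const_mul _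
  -- the key difference identity
  have hdiff : β (aj + s) - (∫ a in Ioi aj, β (a + s) * (κ * p (κ * (a - aj))))
      = -∫ u in Ioi (0 : ℝ), g u := by
    have hconst : β (aj + s) = ∫ u in Ioi (0 : ℝ), β (aj + s) * p u := by
      rw [integral_const_mul, hp_one, mul_one]
    rw [hCoV]
    conv_lhs => rw [hconst]
    rw [← integral_sub hintc hint1]
    rw [← integral_neg]
    congr 1
    funext u
    simp [hgdef]
    ring
  -- main estimate
  have habsle : |∫ u in Ioi (0 : ℝ), g u| ≤ ∫ u in Ioi (0 : ℝ), |g u| := by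
    simpa [Real.norm_eq_abs] using norm_integral_le_integral_norm (μ := volume.restrict (Ioi 0)) g
  have hA2 : (∫ u in Ioi (0 : ℝ), |g u|) ≤ 2 := by
    calc (∫ u in Ioi (0 : ℝ), |g u|) ≤ ∫ u in Ioi (0 : ℝ), 2 * p u :=
          setIntegral_mono_on hintg.abs hint2p measurableSet_Ioi hg2
      _ = 2 := by rw [integral_const_mul, hp_one]; norm_num
  rw [Real.dist_eq]
  have hkey : |(fun t => I₀j * Real.exp (-(ν + D) * (t - t₀)) * β (aj + (t - t₀))) t -
      I₀j * Real.exp (-(ν + D) * (t - t₀)) *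
        ∫ a in Ioi aj, β (a + (t - t₀)) * (κ * p (κ * (a - aj)))|
      = I₀j * Real.exp (-(ν + D) * s) * |∫ u in Ioi (0 : ℝ), g u| := by
    simp only
    rw [← hsdef, ← mul_sub, abs_mul, hdiff, abs_neg]
    congr 1
    rw [abs_mul, abs_of_nonneg hI₀j, abs_of_nonneg (Real.exp_pos _).le]
  rw [hkey]
  have hexple1 : Real.exp (-(ν + D) * s) ≤ 1 := by
    rw [Real.exp_le_one_iff]
    nlinarith
  have hAnonneg : 0 ≤ ∫ u in Ioi (0 : ℝ), |g u| :=
    setIntegral_nonneg measurableSet_Ioi fun u _ => abs_nonneg _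
  by_cases hsS : s ≤ S
  · -- small-time case: use uniform continuity
    have hMκ : M / κ ≤ δ / 2 := by
      rw [div_le_div_iff₀ hκ0 (by norm_num : (0:ℝ) < 2)]
      have h1 : 2 * M / δ ≤ κ := le_trans (le_max_left _ _) hκ
      rw [div_le_iff₀ hδpos] at h1
      linarith
    have hsmall : ∀ u ∈ Ioc (0 : ℝ) M, |g u| ≤ ε₁ * p u := by
      intro u hu
      have hpu : 0 ≤ p u := hp_nonneg u hu.1.le
      have huκ : u / κ ≤ δ / 2 := le_trans ((div_le_div_iff_of_pos_right hκ0).2 hu.2) hMκ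
      have huκ0 : 0 ≤ u / κ := div_nonneg hu.1.le hκ0.le
      have hx : aj + u / κ + s ∈ Icc (0 : ℝ) R :=
        ⟨hmapsTo u hu.1, by rw [hRdef]; linarith [hδ1]⟩
      have hy : aj + s ∈ Icc (0 : ℝ) R := ⟨by linarith, by rw [hRdef]; linarith⟩
      have hd : dist (aj + u / κ + s) (aj + s) ≤ δ₀ := by
        rw [Real.dist_eq]
        have : aj + u / κ + s - (aj + s) = u / κ := by ring
        rw [this, abs_of_nonneg huκ0]
        have : δ ≤ δ₀ := min_le_left _ _
        linarith
      have hβd : |β (aj + u / κ + s) - β (aj + s)| ≤ ε₁ := by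
        have := hδ _ hx _ hy hd
        rwa [Real.dist_eq] at this
      calc |g u| = |β (aj + u / κ + s) - β (aj + s)| * |p u| := abs_mul _ _
        _ ≤ ε₁ * p u := by
            rw [abs_of_nonneg hpu]
            exact mul_le_mul_of_nonneg_right hβd hpu
    have hI1 : (∫ u in Ioc (0 : ℝ) M, |g u|) ≤ ε₁ := by
      calc (∫ u in Ioc (0 : ℝ) M, |g u|) ≤ ∫ u in Ioc (0 : ℝ) M, ε₁ * p u :=
            setIntegral_mono_on (IntegrableOn.mono_set hintg.abs Ioc_subset_Ioi_self)
              (IntegrableOn.mono_set (hp_int.const_mul _) Ioc_subset_Ioi_self) measurableSet_Ioc hsmall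
        _ = ε₁ * ∫ u in Ioc (0 : ℝ) M, p u := integral_const_mul _ _
        _ ≤ ε₁ * ∫ u in Ioi (0 : ℝ), p u := by
            apply mul_le_mul_of_nonneg_left _ hε₁.le
            exact setIntegral_mono_set hp_int
              ((ae_restrict_iff' measurableSet_Ioi).2
                (ae_of_all _ fun u hu => hp_nonneg u hu.le))
              (HasSubset.Subset.eventuallyLE Ioc_subset_Ioi_self)
        _ = ε₁ := by rw [hp_one, mul_one]
    have hI2 : (∫ u in Ioi M, |g u|) ≤ 2 * ∫ u in Ioi M, p u := by
      calc (∫ u in Ioi M, |g u|) ≤ ∫ u in Ioi M, 2 * p u :=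
            setIntegral_mono_on (IntegrableOn.mono_set hintg.abs (Ioi_subset_Ioi hM0))
              (IntegrableOn.mono_set hint2p (Ioi_subset_Ioi hM0)) measurableSet_Ioi
              fun u hu => hg2 u (lt_of_le_of_lt hM0 hu)
        _ = 2 * ∫ u in Ioi M, p u := integral_const_mul _ _
    have hA3 : (∫ u in Ioi (0 : ℝ), |g u|) < 3 * ε₁ := by
      rw [hsplit M hM0 (fun u => |g u|) hintg.abs]
      have h2M : 2 * (∫ u in Ioi M, p u) < 2 * ε₁ :=
        mul_lt_mul_of_pos_left hMε two_pos
      linarith [hI1, hI2]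
    have hfin : I₀j * Real.exp (-(ν + D) * s) * |∫ u in Ioi (0 : ℝ), g u|
        ≤ (I₀j + 1) * ∫ u in Ioi (0 : ℝ), |g u| := by
      have hcoef : I₀j * Real.exp (-(ν + D) * s) ≤ I₀j + 1 := by
        have := mul_le_mul_of_nonneg_left hexple1 hI₀j
        linarith
      exact mul_le_mul hcoef habsle (abs_nonneg _)
        (by linarith)
    have hfin2 : (I₀j + 1) * (∫ u in Ioi (0 : ℝ), |g u|) < (I₀j + 1) * (3 * ε₁) :=
      mul_lt_mul_of_pos_left hA3 (by linarith)
    have hfin3 : (I₀j + 1) * (3 * ε₁) = 3 * ε / 4 := by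
      rw [hε₁def]
      field_simp
    calc I₀j * Real.exp (-(ν + D) * s) * |∫ u in Ioi (0 : ℝ), g u|
        ≤ (I₀j + 1) * ∫ u in Ioi (0 : ℝ), |g u| := hfin
      _ < (I₀j + 1) * (3 * ε₁) := hfin2
      _ = 3 * ε / 4 := hfin3
      _ < ε := by linarith
  · -- large-time case: use exponential decay
    push_neg at hsS
    have he : Real.exp (-(ν + D) * s) ≤ Real.exp (-(ν + D) * S) := by
      apply Real.exp_le_exp.2
      nlinarith
    have habs2 : |∫ u in Ioi (0 : ℝ), g u| ≤ 2 := le_trans habsle hA2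
    have h1 : 0 < Real.exp (-(ν + D) * s) := Real.exp_pos _
    have h2 : 0 < Real.exp (-(ν + D) * S) := Real.exp_pos _
    calc I₀j * Real.exp (-(ν + D) * s) * |∫ u in Ioi (0 : ℝ), g u|
        ≤ I₀j * Real.exp (-(ν + D) * s) * 2 :=
          mul_le_mul_of_nonneg_left habs2 (mul_nonneg hI₀j h1.le)
      _ ≤ I₀j * Real.exp (-(ν + D) * S) * 2 :=
          mul_le_mul_of_nonneg_right (mul_le_mul_of_nonneg_left he hI₀j) two_pos.le
      _ < ε := hSε
end

section
/- Let t₀ ∈ ℝ, ν > 0, D ≥ 0, δ ≥ 0, S₀ ≥ 0, R₀ ≥ 0, I₀ > 0, and T > 0. For a continuous function x : [t₀, t₀+T] → ℝ define F(x)(t) = S₀ − ∫_{t₀}^{t} ( x(m) − δ[ e^{−δ(m−t₀)} R₀ + ν ∫_{t₀}^{m} e^{−δ(m−σ)} ( e^{−(ν+D)(σ−t₀)} I₀ + ∫_{0}^{σ−t₀} e^{−(ν+D)a} x(σ−a) da ) dσ ] ) dm. Then for all continuous x₁, x₂ on [t₀, t₀+T], sup_{t∈[t₀,t₀+T]} |F(x₁)(t)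 − F(x₂)(t)| ≤ (1 + ν δ T²) T · sup_{t∈[t₀,t₀+T]} |x₁(t) − x₂(t)|. -/
open MeasureTheory Set Filter Real

/-- The operator `F` sending a candidate flow of new infections `x` to the corresponding
number of susceptibles:
`F(x)(t) = S₀ − ∫_{t₀}^{t} ( x(m) − δ[ e^{−δ(m−t₀)} R₀ +
  ν ∫_{t₀}^{m} e^{−δ(m−σ)} ( e^{−(ν+D)(σ−t₀)} I₀ + ∫_{0}^{σ−t₀} e^{−(ν+D)a} x(σ−a) da ) dσ ] ) dm`. -/
noncomputable def Fop (t₀ ν D δ S₀ R₀ I₀ : ℝ) (x : ℝ → ℝ) (t : ℝ) : ℝ :=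
  S₀ - ∫ m in t₀..t,
    (x m - δ * (Real.exp (-δ * (m - t₀)) * R₀ +
      ν * ∫ σ in t₀..m, Real.exp (-δ * (m - σ)) *
        (Real.exp (-(ν + D) * (σ - t₀)) * I₀ +
          ∫ a in (0 : ℝ)..(σ - t₀), Real.exp (-(ν + D) * a) * x (σ - a))))

lemma Fop_shift (c t₀ σ : ℝ) (x : ℝ → ℝ) :
    (∫ a in (0:ℝ)..(σ - t₀), Real.exp (-c * a) * x (σ - a))
      = Real.exp (-(c * σ)) * ∫ u in t₀..σ, Real.exp (c * u) * x u := by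
  have h1 : (∫ a in (0:ℝ)..(σ - t₀), Real.exp (-c * a) * x (σ - a))
      = ∫ a in (0:ℝ)..(σ - t₀), Real.exp (-(c * σ)) *
          ((fun u => Real.exp (c * u) * x u) (σ - a)) := by
    apply intervalIntegral.integral_congr
    intro a _
    simp only
    rw [← mul_assoc, ← Real.exp_add]
    ring_nf
  rw [h1, intervalIntegral.integral_const_mul,
    intervalIntegral.integral_comp_sub_left (fun u => Real.exp (c * u) * x u) σ]
  norm_num

lemma Fop_fact (δ t₀ m : ℝ) (h : ℝ → ℝ) :
    (∫ σ in t₀..m, Real.exp (-δ * (m - σ)) * h σ)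
      = Real.exp (-(δ * m)) * ∫ σ in t₀..m, Real.exp (δ * σ) * h σ := by
  rw [← intervalIntegral.integral_const_mul]
  apply intervalIntegral.integral_congr
  intro σ _
  simp only
  rw [← mul_assoc, ← Real.exp_add]
  ring_nf

lemma Fop_primitive_cont {a b : ℝ} (hab : a ≤ b) {f : ℝ → ℝ}
    (hf : ContinuousOn f (Icc a b)) :
    ContinuousOn (fun x => ∫ t in a..x, f t) (Icc a b) := by
  have h := intervalIntegral.continuousOn_primitive_interval
    (μ := volume) (f := f) (a := a) (b := b) ?_
  · rwa [uIcc_of_le hab] at h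
  · rw [uIcc_of_le hab]
    exact hf.integrableOn_Icc

noncomputable def Jf (ν D t₀ : ℝ) (x : ℝ → ℝ) (σ : ℝ) : ℝ :=
  ∫ a in (0:ℝ)..(σ - t₀), Real.exp (-(ν + D) * a) * x (σ - a)

noncomputable def hf (ν D t₀ I₀ : ℝ) (x : ℝ → ℝ) (σ : ℝ) : ℝ :=
  Real.exp (-(ν + D) * (σ - t₀)) * I₀ + Jf ν D t₀ x σ

noncomputable def Af (t₀ ν D δ R₀ I₀ : ℝ) (x : ℝ → ℝ) (m : ℝ) : ℝ :=
  x m - δ * (Real.exp (-δ * (m - t₀)) * R₀ +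
    ν * ∫ σ in t₀..m, Real.exp (-δ * (m - σ)) * hf ν D t₀ I₀ x σ)

lemma Jf_cont {ν D t₀ T : ℝ} (hT : 0 ≤ T) {x : ℝ → ℝ}
    (hx : ContinuousOn x (Icc t₀ (t₀ + T))) :
    ContinuousOn (Jf ν D t₀ x) (Icc t₀ (t₀ + T)) := by
  have heq : Jf ν D t₀ x = fun σ =>
      Real.exp (-((ν + D) * σ)) * ∫ u in t₀..σ, Real.exp ((ν + D) * u) * x u := by
    funext σ
    exact Fop_shift (ν + D) t₀ σ x
  rw [heq]
  refine ContinuousOn.mul ?_ ?_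
  · exact (Real.continuous_exp.comp (by fun_prop)).continuousOn
  · refine Fop_primitive_cont (by linarith) ?_
    exact ((Real.continuous_exp.comp (by fun_prop)).continuousOn).mul hx

lemma hf_cont {ν D t₀ I₀ T : ℝ} (hT : 0 ≤ T) {x : ℝ → ℝ}
    (hx : ContinuousOn x (Icc t₀ (t₀ + T))) :
    ContinuousOn (hf ν D t₀ I₀ x) (Icc t₀ (t₀ + T)) := by
  unfold hf
  exact ((Real.continuous_exp.comp (by fun_prop)).continuousOn.mul continuousOn_const).add
    (Jf_cont hT hx)

lemma Af_cont {t₀ ν D δ R₀ I₀ T : ℝ} (hT : 0 ≤ T) {x : ℝ → ℝ}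
    (hx : ContinuousOn x (Icc t₀ (t₀ + T))) :
    ContinuousOn (Af t₀ ν D δ R₀ I₀ x) (Icc t₀ (t₀ + T)) := by
  unfold Af
  refine hx.sub (continuousOn_const.mul (ContinuousOn.add ?_ (continuousOn_const.mul ?_)))
  · exact (Real.continuous_exp.comp (by fun_prop)).continuousOn.mul continuousOn_const
  · have heq : (fun m => ∫ σ in t₀..m, Real.exp (-δ * (m - σ)) * hf ν D t₀ I₀ x σ)
        = fun m => Real.exp (-(δ * m)) * ∫ σ in t₀..m,
            Real.exp (δ * σ) * hf ν D t₀ I₀ x σ := by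
      funext m
      exact Fop_fact δ t₀ m _
    rw [heq]
    refine ContinuousOn.mul ((Real.continuous_exp.comp (by fun_prop)).continuousOn) ?_
    exact Fop_primitive_cont (by linarith)
      (((Real.continuous_exp.comp (by fun_prop)).continuousOn).mul (hf_cont hT hx))

lemma Fop_eq (t₀ ν D δ S₀ R₀ I₀ : ℝ) (x : ℝ → ℝ) (t : ℝ) :
    Fop t₀ ν D δ S₀ R₀ I₀ x t = S₀ - ∫ m in t₀..t, Af t₀ ν D δ R₀ I₀ x m := by
  rfl

/-- `F` is Lipschitz for the sup norm on `[t₀, t₀+T]` with constant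
`(1 + ν δ T²) T`. -/
theorem Fop_lipschitz
    (t₀ ν D δ S₀ R₀ I₀ T : ℝ)
    (hν : 0 < ν) (hD : 0 ≤ D) (hδ : 0 ≤ δ)
    (hS₀ : 0 ≤ S₀) (hR₀ : 0 ≤ R₀) (hI₀ : 0 < I₀) (hT : 0 < T)
    (x₁ x₂ : ℝ → ℝ)
    (hx₁ : ContinuousOn x₁ (Icc t₀ (t₀ + T)))
    (hx₂ : ContinuousOn x₂ (Icc t₀ (t₀ + T))) :
    (⨆ t : Icc t₀ (t₀ + T),
        |Fop t₀ ν D δ S₀ R₀ I₀ x₁ t - Fop t₀ ν D δ S₀ R₀ I₀ x₂ t|) ≤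
      (1 + ν * δ * T ^ 2) * T * ⨆ t : Icc t₀ (t₀ + T), |x₁ t - x₂ t| := by
  have hle : t₀ ≤ t₀ + T := by linarith
  have hne : (Icc t₀ (t₀ + T)).Nonempty := nonempty_Icc.mpr hle
  haveI : Nonempty (Icc t₀ (t₀ + T)) := hne.to_subtype
  set M : ℝ := ⨆ t : Icc t₀ (t₀ + T), |x₁ t - x₂ t| with hMdef
  -- bounds on M
  have hbdd : BddAbove (range fun t : Icc t₀ (t₀ + T) => |x₁ t - x₂ t|) := by
    have hc : ContinuousOn (fun s => |x₁ s - x₂ s|) (Icc t₀ (t₀ + T)) :=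
      (hx₁.sub hx₂).abs
    rcases (isCompact_Icc.image_of_continuousOn hc).bddAbove with ⟨C, hC⟩
    refine ⟨C, ?_⟩
    rintro y ⟨⟨s, hs⟩, rfl⟩
    exact hC (mem_image_of_mem _ hs)
  have hM : ∀ s ∈ Icc t₀ (t₀ + T), |x₁ s - x₂ s| ≤ M := fun s hs =>
    le_ciSup hbdd (⟨s, hs⟩ : Icc t₀ (t₀ + T))
  have hM0 : 0 ≤ M := le_trans (abs_nonneg _) (hM t₀ (left_mem_Icc.mpr hle))
  -- pointwise bound
  refine ciSup_le ?_
  rintro ⟨t, ht⟩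
  simp only
  rw [Fop_eq, Fop_eq]
  have hA₁ : IntervalIntegrable (Af t₀ ν D δ R₀ I₀ x₁) volume t₀ t := by
    apply ContinuousOn.intervalIntegrable
    apply (Af_cont hT.le hx₁).mono
    rw [uIcc_of_le ht.1]
    exact Icc_subset_Icc le_rfl ht.2
  have hA₂ : IntervalIntegrable (Af t₀ ν D δ R₀ I₀ x₂) volume t₀ t := by
    apply ContinuousOn.intervalIntegrable
    apply (Af_cont hT.le hx₂).mono
    rw [uIcc_of_le ht.1]
    exact Icc_subset_Icc le_rfl ht.2
  have key : S₀ - (∫ m in t₀..t, Af t₀ ν D δ R₀ I₀ x₁ m)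
      - (S₀ - ∫ m in t₀..t, Af t₀ ν D δ R₀ I₀ x₂ m)
      = -∫ m in t₀..t, (Af t₀ ν D δ R₀ I₀ x₁ m - Af t₀ ν D δ R₀ I₀ x₂ m) := by
    rw [intervalIntegral.integral_sub hA₁ hA₂]; ring
  rw [key, abs_neg]
  have hbound : ∀ m ∈ Set.uIoc t₀ t,
      ‖Af t₀ ν D δ R₀ I₀ x₁ m - Af t₀ ν D δ R₀ I₀ x₂ m‖ ≤ M + δ * ν * (T * M * T) := by
    intro m hm
    rw [uIoc_of_le ht.1] at hm
    have hm' : m ∈ Icc t₀ (t₀ + T) := ⟨hm.1.le, hm.2.trans ht.2⟩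
    -- combine middle integrals
    have hint₁ : IntervalIntegrable (fun σ => Real.exp (-δ * (m - σ)) * hf ν D t₀ I₀ x₁ σ)
        volume t₀ m := by
      apply ContinuousOn.intervalIntegrable
      apply (((Real.continuous_exp.comp (by fun_prop)).continuousOn).mul
        (hf_cont hT.le hx₁)).mono
      rw [uIcc_of_le hm.1.le]
      exact Icc_subset_Icc le_rfl hm'.2
    have hint₂ : IntervalIntegrable (fun σ => Real.exp (-δ * (m - σ)) * hf ν D t₀ I₀ x₂ σ)
        volume t₀ m := by
      apply ContinuousOn.intervalIntegrable
      apply (((Real.continuous_exp.comp (by fun_prop)).continuousOn).mul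
        (hf_cont hT.le hx₂)).mono
      rw [uIcc_of_le hm.1.le]
      exact Icc_subset_Icc le_rfl hm'.2
    have hAdiff : Af t₀ ν D δ R₀ I₀ x₁ m - Af t₀ ν D δ R₀ I₀ x₂ m
        = (x₁ m - x₂ m) - δ * ν *
          ∫ σ in t₀..m, Real.exp (-δ * (m - σ)) * (Jf ν D t₀ x₁ σ - Jf ν D t₀ x₂ σ) := by
      unfold Af
      rw [show (∫ σ in t₀..m, Real.exp (-δ * (m - σ)) * (Jf ν D t₀ x₁ σ - Jf ν D t₀ x₂ σ))
          = (∫ σ in t₀..m, Real.exp (-δ * (m - σ)) * hf ν D t₀ I₀ x₁ σ)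
            - ∫ σ in t₀..m, Real.exp (-δ * (m - σ)) * hf ν D t₀ I₀ x₂ σ from ?_]
      · ring
      · rw [← intervalIntegral.integral_sub hint₁ hint₂]
        apply intervalIntegral.integral_congr
        intro σ _
        unfold hf
        ring
    rw [hAdiff]
    -- bound the middle integral
    have hmid : ‖∫ σ in t₀..m, Real.exp (-δ * (m - σ)) * (Jf ν D t₀ x₁ σ - Jf ν D t₀ x₂ σ)‖
        ≤ (T * M) * |m - t₀| := by
      apply intervalIntegral.norm_integral_le_of_norm_le_const
      intro σ hσ
      rw [uIoc_of_le hm.1.le] at hσ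
      have hσ' : σ ∈ Icc t₀ (t₀ + T) := ⟨hσ.1.le, hσ.2.trans hm'.2⟩
      -- bound |J₁ σ - J₂ σ|
      have hJint : ∀ (x : ℝ → ℝ), ContinuousOn x (Icc t₀ (t₀ + T)) →
          IntervalIntegrable (fun a => Real.exp (-(ν + D) * a) * x (σ - a))
            volume 0 (σ - t₀) := by
        intro x hx
        apply ContinuousOn.intervalIntegrable
        refine ((Real.continuous_exp.comp (by fun_prop)).continuousOn).mul ?_
        refine hx.comp (by fun_prop) ?_
        intro a ha
        rw [uIcc_of_le (by linarith [hσ.1.le] : (0:ℝ) ≤ σ - t₀)] at ha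
        constructor
        · linarith [ha.2]
        · linarith [ha.1, hσ'.2]
      have hJdiff : Jf ν D t₀ x₁ σ - Jf ν D t₀ x₂ σ
          = ∫ a in (0:ℝ)..(σ - t₀),
              Real.exp (-(ν + D) * a) * (x₁ (σ - a) - x₂ (σ - a)) := by
        unfold Jf
        rw [← intervalIntegral.integral_sub (hJint x₁ hx₁) (hJint x₂ hx₂)]
        apply intervalIntegral.integral_congr
        intro a _
        ring
      have hJ : |Jf ν D t₀ x₁ σ - Jf ν D t₀ x₂ σ| ≤ M * (σ - t₀) := by
        rw [hJdiff]
        have := intervalIntegral.norm_integral_le_of_norm_le_const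
          (a := (0:ℝ)) (b := σ - t₀) (C := M)
          (f := fun a => Real.exp (-(ν + D) * a) * (x₁ (σ - a) - x₂ (σ - a))) ?_
        · rw [Real.norm_eq_abs] at this
          calc |∫ a in (0:ℝ)..(σ - t₀), Real.exp (-(ν + D) * a) * (x₁ (σ - a) - x₂ (σ - a))|
              ≤ M * |σ - t₀ - 0| := this
            _ = M * (σ - t₀) := by
                rw [sub_zero, abs_of_nonneg (by linarith [hσ.1.le] : (0:ℝ) ≤ σ - t₀)]
        · intro a ha
          rw [uIoc_of_le (by linarith [hσ.1.le] : (0:ℝ) ≤ σ - t₀)] at ha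
          have hmem : σ - a ∈ Icc t₀ (t₀ + T) := by
            constructor
            · linarith [ha.2]
            · linarith [ha.1, hσ'.2]
          rw [Real.norm_eq_abs, abs_mul, abs_of_nonneg (Real.exp_nonneg _)]
          calc Real.exp (-(ν + D) * a) * |x₁ (σ - a) - x₂ (σ - a)|
              ≤ 1 * M := by
                apply mul_le_mul _ (hM _ hmem) (abs_nonneg _) zero_le_one
                apply Real.exp_le_one_iff.mpr
                nlinarith [ha.1]
            _ = M := one_mul M
      rw [Real.norm_eq_abs, abs_mul, abs_of_nonneg (Real.exp_nonneg _)]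
      calc Real.exp (-δ * (m - σ)) * |Jf ν D t₀ x₁ σ - Jf ν D t₀ x₂ σ|
          ≤ 1 * (M * (σ - t₀)) := by
            apply mul_le_mul _ hJ (abs_nonneg _) zero_le_one
            apply Real.exp_le_one_iff.mpr
            nlinarith [hσ.2]
        _ = M * (σ - t₀) := one_mul _
        _ ≤ T * M := by nlinarith [hσ'.1, hσ'.2]
    have hmT : |m - t₀| ≤ T := by
      rw [abs_of_nonneg (by linarith [hm'.1])]
      linarith [hm'.2]
    rw [Real.norm_eq_abs]
    calc |(x₁ m - x₂ m) - δ * ν *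
          ∫ σ in t₀..m, Real.exp (-δ * (m - σ)) * (Jf ν D t₀ x₁ σ - Jf ν D t₀ x₂ σ)|
        ≤ |x₁ m - x₂ m| + |δ * ν *
          ∫ σ in t₀..m, Real.exp (-δ * (m - σ)) * (Jf ν D t₀ x₁ σ - Jf ν D t₀ x₂ σ)| :=
          abs_sub _ _
      _ ≤ M + δ * ν * (T * M * T) := by
          apply add_le_add (hM m hm')
          rw [abs_mul, abs_of_nonneg (by positivity : (0:ℝ) ≤ δ * ν)]
          have h1 : |∫ σ in t₀..m, Real.exp (-δ * (m - σ)) *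
              (Jf ν D t₀ x₁ σ - Jf ν D t₀ x₂ σ)| ≤ T * M * T := by
            rw [← Real.norm_eq_abs]
            calc _ ≤ (T * M) * |m - t₀| := hmid
              _ ≤ T * M * T := mul_le_mul_of_nonneg_left hmT (by positivity)
          exact mul_le_mul_of_nonneg_left h1 (by positivity)
  have := intervalIntegral.norm_integral_le_of_norm_le_const hbound
  rw [Real.norm_eq_abs] at this
  calc |∫ m in t₀..t, (Af t₀ ν D δ R₀ I₀ x₁ m - Af t₀ ν D δ R₀ I₀ x₂ m)|
      ≤ (M + δ * ν * (T * M * T)) * |t - t₀| := this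
    _ ≤ (M + δ * ν * (T * M * T)) * T := by
        apply mul_le_mul_of_nonneg_left _ (by positivity)
        rw [abs_of_nonneg (by linarith [ht.1])]
        linarith [ht.2]
    _ = (1 + ν * δ * T ^ 2) * T * M := by ring
end

section
/- Let t₀ ∈ ℝ, ν > 0, D ≥ 0, δ ≥ 0, S₀ ≥ 0, R₀ ≥ 0, I₀ > 0, and T > 0. Let τ : [t₀, t₀+T] → [0,∞) be continuous with τ(t) ≤ τ_max for all t, let β : [0,∞) → [0,1] be continuous, and set Γ(a) = e^{−(ν+D)a} β(a). For continuous x on [t₀, t₀+T] define X(x)(t) = τ(t) F(x)(t) [ I₀ Γ(t−t₀) + ∫_{0}^{t−t₀} Γ(a) x(t−a) da ]. Then for all continuous x₁, x₂ on [t₀, t₀+T], with L_F := 1 + ν δ T², one has ‖X(x₁) − X(x₂)‖ ≤ τ_max T [ L_F ( I₀ + T ‖x₁‖ ) + ‖F(x₂)‖ ] ‖x₁ − x₂‖, where ‖·‖ is the supremum norm on [t₀, t₀+T]. -/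
open MeasureTheory Set Filter Real

/-- `Γ(a) = e^{−(ν+D)a} β(a)`. -/
noncomputable def Gam (ν D : ℝ) (β : ℝ → ℝ) (a : ℝ) : ℝ :=
  Real.exp (-(ν + D) * a) * β a

/-- The fixed point operator `X` of the single-cohort Volterra equation:
`X(x)(t) = τ(t) F(x)(t) [ I₀ Γ(t−t₀) + ∫_0^{t−t₀} Γ(a) x(t−a) da ]`. -/
noncomputable def Xop (t₀ ν D δ S₀ R₀ I₀ : ℝ) (τ β : ℝ → ℝ) (x : ℝ → ℝ) (t : ℝ) : ℝ :=
  τ t * Fop t₀ ν D δ S₀ R₀ I₀ x t *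
    (I₀ * Gam ν D β (t - t₀) + ∫ a in (0 : ℝ)..(t - t₀), Gam ν D β a * x (t - a))

/-!
Each ingredient of `X` is an integral of `x` over a window of length at most `T`, against a
kernel bounded by `1`: the infected number differs by at most `‖x₁ - x₂‖ (σ - t₀)`, the
recovered number (one more integration) by `ν ‖x₁ - x₂‖ (m - t₀)²`, and hence `F` by
`(1 + ν δ T²) ‖x₁ - x₂‖ T`. Writing `X(x) = τ F(x) G(x)`, the estimate follows from
`F₁ G₁ - F₂ G₂ = (F₁ - F₂) G₁ + F₂ (G₁ - G₂)` with `|G(x₁)| ≤ I₀ + T ‖x₁‖`, where `G(x)` is the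
bracket in `X`, bounded like the infected number since `|Γ| ≤ 1`.
-/

noncomputable def infected (t₀ ν D I₀ : ℝ) (x : ℝ → ℝ) (σ : ℝ) : ℝ :=
  Real.exp (-(ν + D) * (σ - t₀)) * I₀ +
    ∫ a in (0 : ℝ)..(σ - t₀), Real.exp (-(ν + D) * a) * x (σ - a)

noncomputable def recovered (t₀ ν D δ R₀ I₀ : ℝ) (x : ℝ → ℝ) (m : ℝ) : ℝ :=
  Real.exp (-δ * (m - t₀)) * R₀ +
    ν * ∫ σ in t₀..m, Real.exp (-δ * (m - σ)) * infected t₀ ν D I₀ x σ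

noncomputable def infectionPressure (t₀ ν D I₀ : ℝ) (β x : ℝ → ℝ) (t : ℝ) : ℝ :=
  I₀ * Gam ν D β (t - t₀) + ∫ a in (0 : ℝ)..(t - t₀), Gam ν D β a * x (t - a)

lemma Fop_eq_sub_integral (t₀ ν D δ S₀ R₀ I₀ : ℝ) (x : ℝ → ℝ) (t : ℝ) :
    Fop t₀ ν D δ S₀ R₀ I₀ x t =
      S₀ - ∫ m in t₀..t, (x m - δ * recovered t₀ ν D δ R₀ I₀ x m) :=
  rfl

lemma Xop_eq_mul_infectionPressure (t₀ ν D δ S₀ R₀ I₀ : ℝ) (τ β x : ℝ → ℝ) (t : ℝ) :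
    Xop t₀ ν D δ S₀ R₀ I₀ τ β x t =
      τ t * Fop t₀ ν D δ S₀ R₀ I₀ x t * infectionPressure t₀ ν D I₀ β x t :=
  rfl

lemma abs_exp_neg_mul_le_one {c a : ℝ} (hc : 0 ≤ c) (ha : 0 ≤ a) : |Real.exp (-c * a)| ≤ 1 := by
  rw [abs_of_pos (Real.exp_pos _), Real.exp_le_one_iff, neg_mul, neg_nonpos]
  exact mul_nonneg hc ha

lemma abs_Gam_le_one {ν D : ℝ} {β : ℝ → ℝ} (hνD : 0 ≤ ν + D)
    (hβ : ∀ a, 0 ≤ a → β a ∈ Icc (0 : ℝ) 1) {a : ℝ} (ha : 0 ≤ a) : |Gam ν D β a| ≤ 1 := by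
  rw [Gam, abs_mul, ← one_mul 1]
  obtain ⟨hβ₀, hβ₁⟩ := hβ a ha
  exact mul_le_mul (abs_exp_neg_mul_le_one hνD ha) (abs_le.2 ⟨by linarith, hβ₁⟩)
    (abs_nonneg _) zero_le_one

lemma abs_mul_sub_mul_le (a₁ a₂ b₁ b₂ : ℝ) :
    |a₁ * b₁ - a₂ * b₂| ≤ |a₁ - a₂| * |b₁| + |a₂| * |b₁ - b₂| := by
  rw [← abs_mul, ← abs_mul, show a₁ * b₁ - a₂ * b₂ = (a₁ - a₂) * b₁ + a₂ * (b₁ - b₂) by ring]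
  exact abs_add_le _ _

lemma abs_le_iSup_abs {f : ℝ → ℝ} {a b t : ℝ} (hf : ContinuousOn f (Icc a b))
    (ht : t ∈ Icc a b) : |f t| ≤ ⨆ s : Icc a b, |f s| := by
  obtain ⟨C, hC⟩ := isCompact_Icc.exists_bound_of_continuousOn hf
  exact le_ciSup (f := fun s : Icc a b => |f s|) ⟨C, by rintro _ ⟨s, rfl⟩; exact hC s s.2⟩ ⟨t, ht⟩

lemma abs_intervalIntegral_le {f : ℝ → ℝ} {a b C : ℝ} (hab : a ≤ b)
    (h : ∀ u ∈ Ioc a b, |f u| ≤ C) : |∫ u in a..b, f u| ≤ C * (b - a) := by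
  have := intervalIntegral.norm_integral_le_of_norm_le_const (f := f) fun u hu =>
    h u (by rwa [uIoc_of_le hab] at hu)
  rwa [Real.norm_eq_abs, abs_of_nonneg (sub_nonneg.2 hab)] at this

lemma abs_integral_sub_integral_le {f g : ℝ → ℝ} {a b C : ℝ} (hab : a ≤ b)
    (hf : ContinuousOn f (Icc a b)) (hg : ContinuousOn g (Icc a b))
    (h : ∀ u ∈ Ioc a b, |f u - g u| ≤ C) :
    |(∫ u in a..b, f u) - ∫ u in a..b, g u| ≤ C * (b - a) := by
  rw [← intervalIntegral.integral_sub (hf.intervalIntegrable_of_Icc hab)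
    (hg.intervalIntegrable_of_Icc hab)]
  exact abs_intervalIntegral_le hab h

lemma continuousOn_primitive_of_continuousOn {f : ℝ → ℝ} {a b : ℝ} (hab : a ≤ b)
    (hf : ContinuousOn f (Icc a b)) : ContinuousOn (fun t => ∫ u in a..t, f u) (Icc a b) := by
  have := intervalIntegral.continuousOn_primitive_interval (μ := volume)
    (by rw [uIcc_of_le hab]; exact hf.integrableOn_Icc)
  rwa [uIcc_of_le hab] at this

lemma integral_delay_eq (k y : ℝ → ℝ) (t₀ t : ℝ) :
    ∫ a in (0 : ℝ)..(t - t₀), k a * y (t - a) = ∫ u in t₀..t, k (t - u) * y u := by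
  simpa using intervalIntegral.integral_comp_sub_left (a := 0) (b := t - t₀)
    (fun u => k (t - u) * y u) t

lemma abs_delayIntegral_le {k y : ℝ → ℝ} {t₀ t M : ℝ} (ht : t₀ ≤ t)
    (hk : ∀ a ∈ Ioc 0 (t - t₀), |k a| ≤ 1) (hy : ∀ u ∈ Icc t₀ t, |y u| ≤ M) :
    |∫ a in (0 : ℝ)..(t - t₀), k a * y (t - a)| ≤ M * (t - t₀) := by
  simpa using abs_intervalIntegral_le (sub_nonneg.2 ht) fun a ha => by
    rw [abs_mul, ← one_mul M]
    exact mul_le_mul (hk a ha) (hy (t - a) ⟨by linarith [ha.2], by linarith [ha.1]⟩)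
      (abs_nonneg _) zero_le_one

lemma abs_delayIntegral_sub_le {k x₁ x₂ : ℝ → ℝ} {t₀ t Δ : ℝ} (ht : t₀ ≤ t)
    (hk : ContinuousOn k (Icc 0 (t - t₀))) (hk₁ : ∀ a ∈ Ioc 0 (t - t₀), |k a| ≤ 1)
    (hx₁ : ContinuousOn x₁ (Icc t₀ t)) (hx₂ : ContinuousOn x₂ (Icc t₀ t))
    (hΔ : ∀ u ∈ Icc t₀ t, |x₁ u - x₂ u| ≤ Δ) :
    |(∫ a in (0 : ℝ)..(t - t₀), k a * x₁ (t - a)) - ∫ a in (0 : ℝ)..(t - t₀), k a * x₂ (t - a)|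
      ≤ Δ * (t - t₀) := by
  have hshift : MapsTo (t - ·) (Icc 0 (t - t₀)) (Icc t₀ t) :=
    fun a ha => ⟨by linarith [ha.2], by linarith [ha.1]⟩
  have hint : ∀ x, ContinuousOn x (Icc t₀ t) →
      IntervalIntegrable (fun a => k a * x (t - a)) volume 0 (t - t₀) := fun x hx =>
    (hk.mul (hx.comp (by fun_prop) hshift)).intervalIntegrable_of_Icc (sub_nonneg.2 ht)
  rw [← intervalIntegral.integral_sub (hint x₁ hx₁) (hint x₂ hx₂)]
  simp_rw [← mul_sub]
  exact abs_delayIntegral_le (y := fun u => x₁ u - x₂ u) ht hk₁ hΔ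

lemma continuousOn_integral_exp_mul {c a b : ℝ} {g : ℝ → ℝ} (hab : a ≤ b)
    (hg : ContinuousOn g (Icc a b)) :
    ContinuousOn (fun m => ∫ σ in a..m, Real.exp (-c * (m - σ)) * g σ) (Icc a b) := by
  have hfactor : ∀ m, ∫ σ in a..m, Real.exp (-c * (m - σ)) * g σ =
      Real.exp (-c * m) * ∫ σ in a..m, Real.exp (c * σ) * g σ := fun m => by
    rw [← intervalIntegral.integral_const_mul]
    congr 1 with σ
    rw [← mul_assoc, ← Real.exp_add]
    ring_nf
  simp_rw [hfactor]
  exact (by fun_prop : Continuous fun m => Real.exp (-c * m)).continuousOn.mul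
    (continuousOn_primitive_of_continuousOn hab ((by fun_prop : Continuous fun σ =>
      Real.exp (c * σ)).continuousOn.mul hg))

section Model

variable {t₀ ν D δ S₀ R₀ I₀ : ℝ} {x x₁ x₂ : ℝ → ℝ}

lemma continuousOn_infected {b : ℝ} (hb : t₀ ≤ b) (hx : ContinuousOn x (Icc t₀ b)) :
    ContinuousOn (infected t₀ ν D I₀ x) (Icc t₀ b) := by
  unfold infected
  simp_rw [integral_delay_eq (fun a => Real.exp (-(ν + D) * a))]
  exact (by fun_prop : Continuous _).continuousOn.add (continuousOn_integral_exp_mul hb hx)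

lemma continuousOn_recovered {b : ℝ} (hb : t₀ ≤ b) (hx : ContinuousOn x (Icc t₀ b)) :
    ContinuousOn (recovered t₀ ν D δ R₀ I₀ x) (Icc t₀ b) :=
  (by fun_prop : Continuous fun m => Real.exp (-δ * (m - t₀)) * R₀).continuousOn.add
    (continuousOn_const.mul (continuousOn_integral_exp_mul hb (continuousOn_infected hb hx)))

lemma continuousOn_Fop {b : ℝ} (hb : t₀ ≤ b) (hx : ContinuousOn x (Icc t₀ b)) :
    ContinuousOn (Fop t₀ ν D δ S₀ R₀ I₀ x) (Icc t₀ b) :=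
  continuousOn_const.sub <| continuousOn_primitive_of_continuousOn hb <|
    hx.sub (continuousOn_const.mul (continuousOn_recovered hb hx))

lemma abs_infected_sub_le {σ Δ : ℝ} (hνD : 0 ≤ ν + D) (hσ : t₀ ≤ σ)
    (hx₁ : ContinuousOn x₁ (Icc t₀ σ)) (hx₂ : ContinuousOn x₂ (Icc t₀ σ))
    (hΔ : ∀ u ∈ Icc t₀ σ, |x₁ u - x₂ u| ≤ Δ) :
    |infected t₀ ν D I₀ x₁ σ - infected t₀ ν D I₀ x₂ σ| ≤ Δ * (σ - t₀) := by
  rw [infected, infected, add_sub_add_left_eq_sub]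
  exact abs_delayIntegral_sub_le hσ (by fun_prop)
    (fun a ha => abs_exp_neg_mul_le_one hνD ha.1.le) hx₁ hx₂ hΔ

lemma abs_recovered_sub_le {m Δ : ℝ} (hν : 0 ≤ ν) (hνD : 0 ≤ ν + D) (hδ : 0 ≤ δ) (hm : t₀ ≤ m)
    (hx₁ : ContinuousOn x₁ (Icc t₀ m)) (hx₂ : ContinuousOn x₂ (Icc t₀ m))
    (hΔ : ∀ u ∈ Icc t₀ m, |x₁ u - x₂ u| ≤ Δ) :
    |recovered t₀ ν D δ R₀ I₀ x₁ m - recovered t₀ ν D δ R₀ I₀ x₂ m| ≤ ν * Δ * (m - t₀) ^ 2 := by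
  have hΔ0 : 0 ≤ Δ := (abs_nonneg _).trans (hΔ t₀ (left_mem_Icc.2 hm))
  have hcont : ∀ x, ContinuousOn x (Icc t₀ m) → ContinuousOn
      (fun σ => Real.exp (-δ * (m - σ)) * infected t₀ ν D I₀ x σ) (Icc t₀ m) := fun x hx =>
    (by fun_prop : Continuous fun σ => Real.exp (-δ * (m - σ))).continuousOn.mul
      (continuousOn_infected hm hx)
  have hint := abs_integral_sub_integral_le hm (hcont x₁ hx₁) (hcont x₂ hx₂)
    (C := Δ * (m - t₀)) fun σ hσ => by
      have hsub : Icc t₀ σ ⊆ Icc t₀ m := Icc_subset_Icc_right hσ.2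
      rw [← mul_sub, abs_mul, ← one_mul (Δ * (m - t₀))]
      refine mul_le_mul (abs_exp_neg_mul_le_one hδ (by linarith [hσ.2])) ?_ (abs_nonneg _)
        zero_le_one
      refine (abs_infected_sub_le hνD hσ.1.le (hx₁.mono hsub) (hx₂.mono hsub)
        fun u hu => hΔ u (hsub hu)).trans ?_
      gcongr
      exact hσ.2
  rw [recovered, recovered, add_sub_add_left_eq_sub, ← mul_sub, abs_mul, abs_of_nonneg hν]
  nlinarith [mul_le_mul_of_nonneg_left hint hν]

lemma abs_Fop_sub_le {t Δ : ℝ} (hν : 0 ≤ ν) (hνD : 0 ≤ ν + D) (hδ : 0 ≤ δ) (ht : t₀ ≤ t)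
    (hx₁ : ContinuousOn x₁ (Icc t₀ t)) (hx₂ : ContinuousOn x₂ (Icc t₀ t))
    (hΔ : ∀ u ∈ Icc t₀ t, |x₁ u - x₂ u| ≤ Δ) :
    |Fop t₀ ν D δ S₀ R₀ I₀ x₁ t - Fop t₀ ν D δ S₀ R₀ I₀ x₂ t| ≤
      (1 + ν * δ * (t - t₀) ^ 2) * Δ * (t - t₀) := by
  have hΔ0 : 0 ≤ Δ := (abs_nonneg _).trans (hΔ t₀ (left_mem_Icc.2 ht))
  have hcont : ∀ x, ContinuousOn x (Icc t₀ t) → ContinuousOn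
      (fun m => x m - δ * recovered t₀ ν D δ R₀ I₀ x m) (Icc t₀ t) := fun x hx =>
    hx.sub (continuousOn_const.mul (continuousOn_recovered ht hx))
  rw [Fop_eq_sub_integral, Fop_eq_sub_integral, sub_sub_sub_cancel_left, abs_sub_comm]
  refine abs_integral_sub_integral_le ht (hcont x₁ hx₁) (hcont x₂ hx₂) fun m hm => ?_
  have hsub : Icc t₀ m ⊆ Icc t₀ t := Icc_subset_Icc_right hm.2
  have hrec := abs_recovered_sub_le (R₀ := R₀) (I₀ := I₀) hν hνD hδ hm.1.le (hx₁.mono hsub)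
    (hx₂.mono hsub) fun u hu => hΔ u (hsub hu)
  have hgrow : ν * Δ * (m - t₀) ^ 2 ≤ ν * Δ * (t - t₀) ^ 2 := by
    gcongr
    · linarith [hm.1]
    · exact hm.2
  rw [sub_sub_sub_comm, ← mul_sub]
  refine (abs_sub _ _).trans ?_
  rw [abs_mul, abs_of_nonneg hδ]
  nlinarith [hΔ m ⟨hm.1.le, hm.2⟩, mul_le_mul_of_nonneg_left (hrec.trans hgrow) hδ]

lemma abs_infectionPressure_le {β : ℝ → ℝ} {t M : ℝ} (hνD : 0 ≤ ν + D)
    (hβ : ∀ a, 0 ≤ a → β a ∈ Icc (0 : ℝ) 1) (hI₀ : 0 ≤ I₀) (ht : t₀ ≤ t)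
    (hM : ∀ u ∈ Icc t₀ t, |x u| ≤ M) :
    |infectionPressure t₀ ν D I₀ β x t| ≤ I₀ + M * (t - t₀) := by
  refine (abs_add_le _ _).trans (add_le_add ?_
    (abs_delayIntegral_le ht (fun a ha => abs_Gam_le_one hνD hβ ha.1.le) hM))
  rw [abs_mul, abs_of_nonneg hI₀]
  exact mul_le_of_le_one_right hI₀ (abs_Gam_le_one hνD hβ (sub_nonneg.2 ht))

lemma abs_infectionPressure_sub_le {β : ℝ → ℝ} {t Δ : ℝ} (hνD : 0 ≤ ν + D)
    (hβc : ContinuousOn β (Ici 0)) (hβ : ∀ a, 0 ≤ a → β a ∈ Icc (0 : ℝ) 1) (ht : t₀ ≤ t)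
    (hx₁ : ContinuousOn x₁ (Icc t₀ t)) (hx₂ : ContinuousOn x₂ (Icc t₀ t))
    (hΔ : ∀ u ∈ Icc t₀ t, |x₁ u - x₂ u| ≤ Δ) :
    |infectionPressure t₀ ν D I₀ β x₁ t - infectionPressure t₀ ν D I₀ β x₂ t| ≤
      Δ * (t - t₀) := by
  rw [infectionPressure, infectionPressure, add_sub_add_left_eq_sub]
  exact abs_delayIntegral_sub_le ht
    ((by fun_prop : Continuous fun a => Real.exp (-(ν + D) * a)).continuousOn.mul
      (hβc.mono fun a ha => ha.1))
    (fun a ha => abs_Gam_le_one hνD hβ ha.1.le) hx₁ hx₂ hΔ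

lemma abs_Xop_sub_le (τ β : ℝ → ℝ) (t : ℝ) :
    |Xop t₀ ν D δ S₀ R₀ I₀ τ β x₁ t - Xop t₀ ν D δ S₀ R₀ I₀ τ β x₂ t| ≤
      |τ t| * (|Fop t₀ ν D δ S₀ R₀ I₀ x₁ t - Fop t₀ ν D δ S₀ R₀ I₀ x₂ t| *
          |infectionPressure t₀ ν D I₀ β x₁ t| +
        |Fop t₀ ν D δ S₀ R₀ I₀ x₂ t| *
          |infectionPressure t₀ ν D I₀ β x₁ t - infectionPressure t₀ ν D I₀ β x₂ t|) := by
  rw [Xop_eq_mul_infectionPressure, Xop_eq_mul_infectionPressure, mul_assoc, mul_assoc,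
    ← mul_sub, abs_mul]
  exact mul_le_mul_of_nonneg_left (abs_mul_sub_mul_le _ _ _ _) (abs_nonneg _)

end Model

theorem Xop_lipschitz_estimate_general
    (t₀ ν D δ S₀ R₀ I₀ T τmax : ℝ)
    (hν : 0 < ν) (hD : 0 ≤ D) (hδ : 0 ≤ δ)
    (hI₀ : 0 < I₀) (hT : 0 < T)
    (τ : ℝ → ℝ)
    (hτ_nonneg : ∀ t ∈ Icc t₀ (t₀ + T), 0 ≤ τ t)
    (hτ_bdd : ∀ t ∈ Icc t₀ (t₀ + T), τ t ≤ τmax)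
    (β : ℝ → ℝ) (hβ_cont : ContinuousOn β (Ici 0))
    (hβ_mem : ∀ a, 0 ≤ a → β a ∈ Icc (0 : ℝ) 1)
    (x₁ x₂ : ℝ → ℝ)
    (hx₁ : ContinuousOn x₁ (Icc t₀ (t₀ + T)))
    (hx₂ : ContinuousOn x₂ (Icc t₀ (t₀ + T))) :
    (⨆ t : Icc t₀ (t₀ + T),
        |Xop t₀ ν D δ S₀ R₀ I₀ τ β x₁ t - Xop t₀ ν D δ S₀ R₀ I₀ τ β x₂ t|) ≤
      τmax * T *
        ((1 + ν * δ * T ^ 2) * (I₀ + T * ⨆ t : Icc t₀ (t₀ + T), |x₁ t|) +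
          ⨆ t : Icc t₀ (t₀ + T), |Fop t₀ ν D δ S₀ R₀ I₀ x₂ t|) *
        ⨆ t : Icc t₀ (t₀ + T), |x₁ t - x₂ t| := by
  have hb : t₀ ≤ t₀ + T := by linarith
  have hνD : 0 ≤ ν + D := by linarith
  have : Nonempty (Icc t₀ (t₀ + T)) := ⟨⟨t₀, left_mem_Icc.2 hb⟩⟩
  set M₁ := ⨆ s : Icc t₀ (t₀ + T), |x₁ s|
  set MF := ⨆ s : Icc t₀ (t₀ + T), |Fop t₀ ν D δ S₀ R₀ I₀ x₂ s|
  set Δ := ⨆ s : Icc t₀ (t₀ + T), |x₁ s - x₂ s|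
  refine ciSup_le fun ⟨t, ht⟩ => ?_
  have hsub : Icc t₀ t ⊆ Icc t₀ (t₀ + T) := Icc_subset_Icc_right ht.2
  have hs₀ : 0 ≤ t - t₀ := sub_nonneg.2 ht.1
  have hs : t - t₀ ≤ T := by linarith [ht.2]
  have hM₁ : ∀ u ∈ Icc t₀ t, |x₁ u| ≤ M₁ := fun u hu => abs_le_iSup_abs hx₁ (hsub hu)
  have hΔ : ∀ u ∈ Icc t₀ t, |x₁ u - x₂ u| ≤ Δ :=
    fun u hu => abs_le_iSup_abs (hx₁.sub hx₂) (hsub hu)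
  have hF₂ : |Fop t₀ ν D δ S₀ R₀ I₀ x₂ t| ≤ MF := abs_le_iSup_abs (continuousOn_Fop hb hx₂) ht
  have hτ : |τ t| ≤ τmax := (abs_of_nonneg (hτ_nonneg t ht)).trans_le (hτ_bdd t ht)
  have hM₁0 : 0 ≤ M₁ := (abs_nonneg _).trans (hM₁ t₀ (left_mem_Icc.2 ht.1))
  have hΔ0 : 0 ≤ Δ := (abs_nonneg _).trans (hΔ t₀ (left_mem_Icc.2 ht.1))
  have hF : |Fop t₀ ν D δ S₀ R₀ I₀ x₁ t - Fop t₀ ν D δ S₀ R₀ I₀ x₂ t| ≤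
      (1 + ν * δ * T ^ 2) * Δ * T :=
    (abs_Fop_sub_le hν.le hνD hδ ht.1 (hx₁.mono hsub) (hx₂.mono hsub) hΔ).trans (by gcongr)
  have hG₁ : |infectionPressure t₀ ν D I₀ β x₁ t| ≤ I₀ + M₁ * T :=
    (abs_infectionPressure_le hνD hβ_mem hI₀.le ht.1 hM₁).trans (by gcongr)
  have hG : |infectionPressure t₀ ν D I₀ β x₁ t - infectionPressure t₀ ν D I₀ β x₂ t| ≤ Δ * T :=
    (abs_infectionPressure_sub_le hνD hβ_cont hβ_mem ht.1 (hx₁.mono hsub) (hx₂.mono hsub)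
      hΔ).trans (by gcongr)
  calc _ ≤ _ := abs_Xop_sub_le τ β t
    _ ≤ τmax * ((1 + ν * δ * T ^ 2) * Δ * T * (I₀ + M₁ * T) + MF * (Δ * T)) := by
      have hMF0 : 0 ≤ MF := (abs_nonneg _).trans hF₂
      have hτmax : 0 ≤ τmax := (abs_nonneg _).trans hτ
      gcongr
    _ = _ := by ring

/-- with `L_F = 1 + ν δ T²`, for all continuous `x₁, x₂` on `[t₀, t₀+T]`,
`‖X(x₁) − X(x₂)‖ ≤ τ_max T [ L_F (I₀ + T ‖x₁‖) + ‖F(x₂)‖ ] ‖x₁ − x₂‖` for the sup norm. -/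
theorem Xop_lipschitz_estimate
    (t₀ ν D δ S₀ R₀ I₀ T τmax : ℝ)
    (hν : 0 < ν) (hD : 0 ≤ D) (hδ : 0 ≤ δ)
    (hS₀ : 0 ≤ S₀) (hR₀ : 0 ≤ R₀) (hI₀ : 0 < I₀) (hT : 0 < T)
    (τ : ℝ → ℝ) (hτ_cont : ContinuousOn τ (Icc t₀ (t₀ + T)))
    (hτ_nonneg : ∀ t ∈ Icc t₀ (t₀ + T), 0 ≤ τ t)
    (hτ_bdd : ∀ t ∈ Icc t₀ (t₀ + T), τ t ≤ τmax)
    (β : ℝ → ℝ) (hβ_cont : ContinuousOn β (Ici 0))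
    (hβ_mem : ∀ a, 0 ≤ a → β a ∈ Icc (0 : ℝ) 1)
    (x₁ x₂ : ℝ → ℝ)
    (hx₁ : ContinuousOn x₁ (Icc t₀ (t₀ + T)))
    (hx₂ : ContinuousOn x₂ (Icc t₀ (t₀ + T))) :
    (⨆ t : Icc t₀ (t₀ + T),
        |Xop t₀ ν D δ S₀ R₀ I₀ τ β x₁ t - Xop t₀ ν D δ S₀ R₀ I₀ τ β x₂ t|) ≤
      τmax * T *
        ((1 + ν * δ * T ^ 2) * (I₀ + T * ⨆ t : Icc t₀ (t₀ + T), |x₁ t|) +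
          ⨆ t : Icc t₀ (t₀ + T), |Fop t₀ ν D δ S₀ R₀ I₀ x₂ t|) *
        ⨆ t : Icc t₀ (t₀ + T), |x₁ t - x₂ t| :=
  Xop_lipschitz_estimate_general t₀ ν D δ S₀ R₀ I₀ T τmax hν hD hδ hI₀ hT τ hτ_nonneg hτ_bdd β
    hβ_cont hβ_mem x₁ x₂ hx₁ hx₂
end

section
/- Let t₀ ∈ ℝ, ν > 0, D ≥ 0, δ ≥ 0, S₀ > 0, R₀ ≥ 0, I₀ > 0. Let τ : [t₀,∞) → [0,∞) be bounded continuous with τ(t) ≤ τ_max (τ_max > 0), let β : [0,∞) → [0,1] be continuous, set Γ(a) = e^{−(ν+D)a} β(a), let p : [0,∞) → [0,∞) be integrable with ∫₀^∞ p(a) da = 1, and for κ > 0 define Λ_κ(t) = I₀ e^{−(ν+D)(t−t₀)} ∫₀^∞ β(a+(t−t₀)) κ p(κ a) da. Then there exists T > 0 with the following property: if for each κ > 0, N_κ : [t₀, t₀+T] → ℝ is continuous, satisfies sup_t |N_κ(t)| ≤ 2 τ_max S₀ I₀, and satisfies N_κ(t) = τ(t) F(N_κ)(t) [ Λ_κ(t)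 + ∫_{0}^{t−t₀} Γ(a) N_κ(t−a) da ] for all t ∈ [t₀, t₀+T], then the family (N_κ) is uniformly Cauchy as κ → ∞: for every ε > 0 there exists K > 0 such that for all κ₁, κ₂ > K, sup_{t∈[t₀,t₀+T]} |N_{κ₁}(t) − N_{κ₂}(t)| ≤ ε. -/
open MeasureTheory Set Filter Real
open Topology

/-- `Λ_κ(t) = I₀ e^{−(ν+D)(t−t₀)} ∫₀^∞ β(a+(t−t₀)) κ p(κ a) da`. -/
noncomputable def Lam (t₀ ν D I₀ : ℝ) (β p : ℝ → ℝ) (κ t : ℝ) : ℝ :=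
  I₀ * Real.exp (-(ν + D) * (t - t₀)) *
    ∫ a in Ioi (0 : ℝ), β (a + (t - t₀)) * (κ * p (κ * a))

lemma tail_tendsto (p : ℝ → ℝ) (hp_int : IntegrableOn p (Ioi 0)) :
    Tendsto (fun c => ∫ a in Ioi c, p a) atTop (𝓝 0) := by
  have h1 : Tendsto (fun c => ∫ a in (0:ℝ)..c, p a) atTop (𝓝 (∫ a in Ioi (0:ℝ), p a)) :=
    intervalIntegral_tendsto_integral_Ioi 0 hp_int tendsto_id
  have h2 : Tendsto (fun c => (∫ a in Ioi (0:ℝ), p a) - ∫ a in (0:ℝ)..c, p a) atTop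
      (𝓝 ((∫ a in Ioi (0:ℝ), p a) - ∫ a in Ioi (0:ℝ), p a)) := tendsto_const_nhds.sub h1
  rw [sub_self] at h2
  apply h2.congr'
  filter_upwards [eventually_ge_atTop (0:ℝ)] with c hc
  have hsplit : ∫ a in Ioi (0:ℝ), p a = (∫ a in Ioc (0:ℝ) c, p a) + ∫ a in Ioi c, p a := by
    rw [← setIntegral_union]
    · rw [Ioc_union_Ioi_eq_Ioi hc]
    · exact Ioc_disjoint_Ioi le_rfl
    · exact measurableSet_Ioi
    · exact hp_int.mono_set (Ioc_subset_Ioi_self.trans (Ioi_subset_Ioi le_rfl))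
    · exact hp_int.mono_set (Ioi_subset_Ioi hc)
  rw [intervalIntegral.integral_of_le hc, hsplit]
  ring

lemma q_integrable (p : ℝ → ℝ) (hp_int : IntegrableOn p (Ioi 0)) {κ η : ℝ}
    (hκ : 0 < κ) (hη : 0 ≤ η) :
    IntegrableOn (fun a => κ * p (κ * a)) (Ioi η) := by
  have := (integrableOn_Ioi_comp_mul_left_iff p η hκ).2
    (hp_int.mono_set (Ioi_subset_Ioi (by positivity)))
  exact this.const_mul κ

lemma q_int_eq (p : ℝ → ℝ) {κ : ℝ} (η : ℝ) (hκ : 0 < κ) :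
    ∫ a in Ioi η, κ * p (κ * a) = ∫ a in Ioi (κ * η), p a := by
  rw [MeasureTheory.integral_const_mul, integral_comp_mul_left_Ioi p η hκ, smul_eq_mul,
    ← mul_assoc, mul_inv_cancel₀ hκ.ne', one_mul]

lemma q_mul_integrable (p : ℝ → ℝ) (hp_int : IntegrableOn p (Ioi 0)) {κ : ℝ} (hκ : 0 < κ)
    {f : ℝ → ℝ} (hf : ContinuousOn f (Ici 0)) {C : ℝ} (hC : ∀ a, 0 ≤ a → |f a| ≤ C) :
    IntegrableOn (fun a => f a * (κ * p (κ * a))) (Ioi 0) := by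
  refine Integrable.bdd_mul (c := C) (q_integrable p hp_int hκ le_rfl) ?_ ?_
  · exact (hf.mono Ioi_subset_Ici_self).aestronglyMeasurable measurableSet_Ioi
  · refine (ae_restrict_iff' measurableSet_Ioi).2 (ae_of_all _ fun a ha => ?_)
    exact hC a (le_of_lt ha)

lemma q_nonneg (p : ℝ → ℝ) (hp_nonneg : ∀ a, 0 ≤ a → 0 ≤ p a) {κ : ℝ} (hκ : 0 < κ)
    {a : ℝ} (ha : 0 ≤ a) : 0 ≤ κ * p (κ * a) :=
  mul_nonneg hκ.le (hp_nonneg _ (by positivity))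

lemma lam_bound (t₀ ν D I₀ : ℝ) (hνD : 0 ≤ ν + D) (hI₀ : 0 ≤ I₀)
    (β : ℝ → ℝ) (hβ_cont : ContinuousOn β (Ici 0)) (hβ_mem : ∀ a, 0 ≤ a → β a ∈ Icc (0:ℝ) 1)
    (p : ℝ → ℝ) (hp_nonneg : ∀ a, 0 ≤ a → 0 ≤ p a) (hp_int : IntegrableOn p (Ioi 0))
    (hp_one : ∫ a in Ioi (0:ℝ), p a = 1) {κ t : ℝ} (hκ : 0 < κ) (ht : t₀ ≤ t) :
    |Lam t₀ ν D I₀ β p κ t| ≤ I₀ := by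
  have hs : (0:ℝ) ≤ t - t₀ := by linarith
  have hβs : ContinuousOn (fun a => β (a + (t - t₀))) (Ici 0) := by
    refine hβ_cont.comp (by fun_prop) fun a ha => ?_
    simp only [mem_Ici] at ha ⊢; linarith
  have hβsb : ∀ a, 0 ≤ a → |β (a + (t - t₀))| ≤ 1 := fun a ha => by
    have := hβ_mem (a + (t - t₀)) (by linarith)
    rw [abs_le]; exact ⟨by linarith [this.1], this.2⟩
  have hint := q_mul_integrable p hp_int hκ hβs hβsb
  have hq1 : ∫ a in Ioi (0:ℝ), κ * p (κ * a) = 1 := by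
    rw [q_int_eq p 0 hκ, mul_zero, hp_one]
  have habs : |∫ a in Ioi (0:ℝ), β (a + (t - t₀)) * (κ * p (κ * a))| ≤ 1 := by
    calc |∫ a in Ioi (0:ℝ), β (a + (t - t₀)) * (κ * p (κ * a))|
        ≤ ∫ a in Ioi (0:ℝ), ‖β (a + (t - t₀)) * (κ * p (κ * a))‖ := by
          rw [← Real.norm_eq_abs]; exact norm_integral_le_integral_norm _
      _ ≤ ∫ a in Ioi (0:ℝ), κ * p (κ * a) := by
          refine setIntegral_mono_on hint.norm (q_integrable p hp_int hκ le_rfl)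
            measurableSet_Ioi fun a ha => ?_
          rw [Real.norm_eq_abs, abs_mul, abs_of_nonneg (q_nonneg p hp_nonneg hκ (le_of_lt ha))]
          exact mul_le_of_le_one_left (q_nonneg p hp_nonneg hκ (le_of_lt ha)) (hβsb a (le_of_lt ha))
      _ = 1 := hq1
  have hexp : Real.exp (-(ν + D) * (t - t₀)) ≤ 1 := by
    rw [Real.exp_le_one_iff]; nlinarith
  rw [Lam, abs_mul, abs_mul, abs_of_nonneg hI₀, abs_of_nonneg (Real.exp_nonneg _)]
  calc I₀ * Real.exp (-(ν + D) * (t - t₀)) * |∫ a in Ioi (0:ℝ), β (a + (t - t₀)) * (κ * p (κ * a))|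
      ≤ I₀ * 1 * 1 := by
        apply mul_le_mul (mul_le_mul le_rfl hexp (Real.exp_nonneg _) hI₀) habs (abs_nonneg _)
        positivity
    _ = I₀ := by ring

lemma lam_approx (t₀ ν D I₀ : ℝ) (hνD : 0 ≤ ν + D) (hI₀ : 0 < I₀)
    (β : ℝ → ℝ) (hβ_cont : ContinuousOn β (Ici 0)) (hβ_mem : ∀ a, 0 ≤ a → β a ∈ Icc (0:ℝ) 1)
    (p : ℝ → ℝ) (hp_nonneg : ∀ a, 0 ≤ a → 0 ≤ p a) (hp_int : IntegrableOn p (Ioi 0))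
    (hp_one : ∫ a in Ioi (0:ℝ), p a = 1) (T : ℝ) (hT : 0 < T) (ε : ℝ) (hε : 0 < ε) :
    ∃ K : ℝ, 1 ≤ K ∧ ∀ κ : ℝ, K < κ → ∀ t ∈ Icc t₀ (t₀ + T),
      |Lam t₀ ν D I₀ β p κ t - I₀ * Real.exp (-(ν + D) * (t - t₀)) * β (t - t₀)| ≤ ε := by
  have hε' : 0 < ε / (2 * I₀) := by positivity
  have huc : UniformContinuousOn β (Icc 0 (T + 1)) :=
    isCompact_Icc.uniformContinuousOn_of_continuous
      (hβ_cont.mono fun x hx => hx.1)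
  rw [Metric.uniformContinuousOn_iff] at huc
  obtain ⟨η, hη, huc⟩ := huc (ε / (2 * I₀)) hε'
  set η' := min (η / 2) 1 with hη'def
  have hη' : 0 < η' := lt_min (by linarith) one_pos
  have hη'1 : η' ≤ 1 := min_le_right _ _
  have hη'η : η' < η := lt_of_le_of_lt (min_le_left _ _) (by linarith)
  obtain ⟨c₀, hc₀⟩ := Metric.tendsto_atTop.1 (tail_tendsto p hp_int) (ε / (4 * I₀)) (by positivity)
  refine ⟨max 1 (c₀ / η'), le_max_left _ _, ?_⟩
  intro κ hκK t ht
  have hκ1 : (1:ℝ) < κ := lt_of_le_of_lt (le_max_left _ _) hκK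
  have hκ : 0 < κ := by linarith
  have hcκ : c₀ ≤ κ * η' :=
    le_of_lt ((div_lt_iff₀ hη').1 (lt_of_le_of_lt (le_max_right 1 (c₀ / η')) hκK))
  set s := t - t₀ with hsdef
  have hs0 : (0:ℝ) ≤ s := by simp only [hsdef]; linarith [ht.1]
  have hsT : s ≤ T := by simp only [hsdef]; linarith [ht.2]
  have hβs : ContinuousOn (fun a => β (a + s)) (Ici 0) := by
    refine hβ_cont.comp (by fun_prop) fun a ha => ?_
    simp only [mem_Ici] at ha ⊢; linarith
  have hdiffc : ContinuousOn (fun a => β (a + s) - β s) (Ici 0) := hβs.sub continuousOn_const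
  have hdiffb : ∀ a, 0 ≤ a → |β (a + s) - β s| ≤ 2 := by
    intro a ha
    have h1 := hβ_mem (a + s) (by linarith)
    have h2 := hβ_mem s hs0
    rw [abs_le]
    exact ⟨by linarith [h1.1, h2.2], by linarith [h1.2, h2.1]⟩
  have hβsb : ∀ a, 0 ≤ a → |β (a + s)| ≤ 1 := fun a ha => by
    have := hβ_mem (a + s) (by linarith)
    rw [abs_le]; exact ⟨by linarith [this.1], this.2⟩
  have hint1 : IntegrableOn (fun a => β (a + s) * (κ * p (κ * a))) (Ioi 0) :=
    q_mul_integrable p hp_int hκ hβs hβsb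
  have hintd : IntegrableOn (fun a => (β (a + s) - β s) * (κ * p (κ * a))) (Ioi 0) :=
    q_mul_integrable p hp_int hκ hdiffc hdiffb
  have hintq : IntegrableOn (fun a => κ * p (κ * a)) (Ioi 0) := q_integrable p hp_int hκ le_rfl
  have hq1 : ∫ a in Ioi (0:ℝ), κ * p (κ * a) = 1 := by
    rw [q_int_eq p 0 hκ, mul_zero, hp_one]
  have hkey : Lam t₀ ν D I₀ β p κ t - I₀ * Real.exp (-(ν + D) * s) * β s
      = I₀ * Real.exp (-(ν + D) * s) *
        ∫ a in Ioi (0:ℝ), (β (a + s) - β s) * (κ * p (κ * a)) := by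
    have h : ∫ a in Ioi (0:ℝ), (β (a + s) - β s) * (κ * p (κ * a))
        = (∫ a in Ioi (0:ℝ), β (a + s) * (κ * p (κ * a))) - β s := by
      simp only [sub_mul]
      rw [integral_sub hint1 (hintq.const_mul (β s)), MeasureTheory.integral_const_mul, hq1,
        mul_one]
    rw [h, Lam]; ring
  have h1 : IntegrableOn (fun a => |(β (a + s) - β s) * (κ * p (κ * a))|) (Ioc 0 η') :=
    MeasureTheory.IntegrableOn.mono_set hintd.abs Ioc_subset_Ioi_self
  have h2 : IntegrableOn (fun a => |(β (a + s) - β s) * (κ * p (κ * a))|) (Ioi η') :=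
    MeasureTheory.IntegrableOn.mono_set hintd.abs (Ioi_subset_Ioi hη'.le)
  have hsplit : ∫ a in Ioi (0:ℝ), |(β (a + s) - β s) * (κ * p (κ * a))|
      = (∫ a in Ioc (0:ℝ) η', |(β (a + s) - β s) * (κ * p (κ * a))|)
        + ∫ a in Ioi η', |(β (a + s) - β s) * (κ * p (κ * a))| := by
    rw [← Ioc_union_Ioi_eq_Ioi hη'.le,
      setIntegral_union (Ioc_disjoint_Ioi le_rfl) measurableSet_Ioi h1 h2]
  have hpiece1 : ∫ a in Ioc (0:ℝ) η', |(β (a + s) - β s) * (κ * p (κ * a))| ≤ ε / (2 * I₀) := by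
    calc ∫ a in Ioc (0:ℝ) η', |(β (a + s) - β s) * (κ * p (κ * a))|
        ≤ ∫ a in Ioc (0:ℝ) η', (ε / (2 * I₀)) * (κ * p (κ * a)) := by
          refine setIntegral_mono_on h1
            ((hintq.mono_set Ioc_subset_Ioi_self).const_mul _) measurableSet_Ioc fun a ha => ?_
          have haq := q_nonneg p hp_nonneg hκ (le_of_lt ha.1)
          rw [abs_mul, abs_of_nonneg haq]
          refine mul_le_mul_of_nonneg_right ?_ haq
          have hd : dist (β (a + s)) (β s) < ε / (2 * I₀) := by
            refine huc (a + s) ⟨by linarith [ha.1], by linarith [ha.2, hη'1]⟩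
              s ⟨hs0, by linarith⟩ ?_
            rw [Real.dist_eq]
            have : |a + s - s| = a := by rw [add_sub_cancel_right, abs_of_pos ha.1]
            rw [this]; exact lt_of_le_of_lt ha.2 hη'η
          rw [Real.dist_eq] at hd
          exact hd.le
      _ = (ε / (2 * I₀)) * ∫ a in Ioc (0:ℝ) η', κ * p (κ * a) :=
          MeasureTheory.integral_const_mul _ _
      _ ≤ (ε / (2 * I₀)) * ∫ a in Ioi (0:ℝ), κ * p (κ * a) := by
          refine mul_le_mul_of_nonneg_left ?_ hε'.le
          refine setIntegral_mono_set hintq ?_ (HasSubset.Subset.eventuallyLE Ioc_subset_Ioi_self)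
          refine (ae_restrict_iff' measurableSet_Ioi).2 (ae_of_all _ fun a ha => ?_)
          exact q_nonneg p hp_nonneg hκ (le_of_lt ha)
      _ = ε / (2 * I₀) := by rw [hq1, mul_one]
  have hpiece2 : ∫ a in Ioi η', |(β (a + s) - β s) * (κ * p (κ * a))| ≤ 2 * (ε / (4 * I₀)) := by
    calc ∫ a in Ioi η', |(β (a + s) - β s) * (κ * p (κ * a))|
        ≤ ∫ a in Ioi η', 2 * (κ * p (κ * a)) := by
          refine setIntegral_mono_on h2
            ((hintq.mono_set (Ioi_subset_Ioi hη'.le)).const_mul _) measurableSet_Ioi fun a ha => ?_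
          have ha0 : (0:ℝ) < a := lt_trans hη' ha
          have haq := q_nonneg p hp_nonneg hκ ha0.le
          rw [abs_mul, abs_of_nonneg haq]
          exact mul_le_mul_of_nonneg_right (hdiffb a ha0.le) haq
      _ = 2 * ∫ a in Ioi η', κ * p (κ * a) := MeasureTheory.integral_const_mul _ _
      _ = 2 * ∫ a in Ioi (κ * η'), p a := by rw [q_int_eq p η' hκ]
      _ ≤ 2 * (ε / (4 * I₀)) := by
          have hd := hc₀ (κ * η') hcκ
          rw [Real.dist_eq, sub_zero] at hd
          nlinarith [le_abs_self (∫ a in Ioi (κ * η'), p a)]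
  have habs : |∫ a in Ioi (0:ℝ), (β (a + s) - β s) * (κ * p (κ * a))| ≤ ε / I₀ := by
    calc |∫ a in Ioi (0:ℝ), (β (a + s) - β s) * (κ * p (κ * a))|
        ≤ ∫ a in Ioi (0:ℝ), ‖(β (a + s) - β s) * (κ * p (κ * a))‖ := by
          rw [← Real.norm_eq_abs]; exact norm_integral_le_integral_norm _
      _ = (∫ a in Ioc (0:ℝ) η', |(β (a + s) - β s) * (κ * p (κ * a))|)
          + ∫ a in Ioi η', |(β (a + s) - β s) * (κ * p (κ * a))| := by
          simp only [Real.norm_eq_abs]; exact hsplit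
      _ ≤ ε / (2 * I₀) + 2 * (ε / (4 * I₀)) := add_le_add hpiece1 hpiece2
      _ = ε / I₀ := by field_simp; ring
  have hexp : Real.exp (-(ν + D) * s) ≤ 1 := by
    rw [Real.exp_le_one_iff]; nlinarith
  rw [hkey, abs_mul, abs_mul, abs_of_nonneg hI₀.le, abs_of_nonneg (Real.exp_nonneg _)]
  calc I₀ * Real.exp (-(ν + D) * s) *
        |∫ a in Ioi (0:ℝ), (β (a + s) - β s) * (κ * p (κ * a))|
      ≤ I₀ * 1 * (ε / I₀) := by
        apply mul_le_mul (mul_le_mul le_rfl hexp (Real.exp_nonneg _) hI₀.le) habs (abs_nonneg _)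
        positivity
    _ = ε := by field_simp

lemma J_cont (t₀ ν D : ℝ) {x : ℝ → ℝ} (hx : Continuous x) :
    Continuous (fun σ => ∫ a in (0:ℝ)..(σ - t₀), Real.exp (-(ν + D) * a) * x (σ - a)) := by
  apply intervalIntegral.continuous_parametric_intervalIntegral_of_continuous
    (f := fun σ a => Real.exp (-(ν + D) * a) * x (σ - a)) (μ := volume)
    (s := fun σ => σ - t₀) <;> fun_prop

lemma H_cont (t₀ ν D δ I₀ : ℝ) {x : ℝ → ℝ} (hx : Continuous x) :
    Continuous (fun m => ∫ σ in t₀..m, Real.exp (-δ * (m - σ)) *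
      (Real.exp (-(ν + D) * (σ - t₀)) * I₀ +
        ∫ a in (0:ℝ)..(σ - t₀), Real.exp (-(ν + D) * a) * x (σ - a))) := by
  have hJ := J_cont t₀ ν D hx
  apply intervalIntegral.continuous_parametric_intervalIntegral_of_continuous
    (μ := volume) (s := fun m : ℝ => m) <;> fun_prop

lemma F_parts_cont (t₀ ν D δ R₀ I₀ : ℝ) {x : ℝ → ℝ} (hx : Continuous x) :
    Continuous (fun m => x m - δ * (Real.exp (-δ * (m - t₀)) * R₀ +
      ν * ∫ σ in t₀..m, Real.exp (-δ * (m - σ)) *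
        (Real.exp (-(ν + D) * (σ - t₀)) * I₀ +
          ∫ a in (0:ℝ)..(σ - t₀), Real.exp (-(ν + D) * a) * x (σ - a)))) := by
  have hH := H_cont t₀ ν D δ I₀ hx
  fun_prop

lemma J_bound (ν D M : ℝ) (hνD : 0 ≤ ν + D) (hM : 0 ≤ M) {x : ℝ → ℝ}
    (hxb : ∀ u, |x u| ≤ M) {c : ℝ} (hc : 0 ≤ c) (σ : ℝ) :
    |∫ a in (0:ℝ)..c, Real.exp (-(ν + D) * a) * x (σ - a)| ≤ M * c := by
  have h := intervalIntegral.norm_integral_le_of_norm_le_const (C := M)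
    (f := fun a => Real.exp (-(ν + D) * a) * x (σ - a)) (a := (0:ℝ)) (b := c) ?_
  · rw [Real.norm_eq_abs] at h
    rw [sub_zero, abs_of_nonneg hc] at h
    exact h
  · intro a ha
    rw [Set.uIoc_of_le hc] at ha
    rw [Real.norm_eq_abs, abs_mul, abs_of_nonneg (Real.exp_nonneg _)]
    have he : Real.exp (-(ν + D) * a) ≤ 1 := by
      rw [Real.exp_le_one_iff]; nlinarith [ha.1]
    calc Real.exp (-(ν + D) * a) * |x (σ - a)| ≤ 1 * M :=
          mul_le_mul he (hxb _) (abs_nonneg _) one_pos.le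
      _ = M := one_mul M

lemma H_bound (t₀ ν D δ I₀ M T : ℝ) (hνD : 0 ≤ ν + D) (hδ : 0 ≤ δ) (hI₀ : 0 ≤ I₀)
    (hM : 0 ≤ M) (hT1 : T ≤ 1) {x : ℝ → ℝ} (hxb : ∀ u, |x u| ≤ M)
    {m : ℝ} (hm : t₀ ≤ m) (hmT : m ≤ t₀ + T) :
    |∫ σ in t₀..m, Real.exp (-δ * (m - σ)) *
      (Real.exp (-(ν + D) * (σ - t₀)) * I₀ +
        ∫ a in (0:ℝ)..(σ - t₀), Real.exp (-(ν + D) * a) * x (σ - a))| ≤ (I₀ + M) * (m - t₀) := by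
  have h := intervalIntegral.norm_integral_le_of_norm_le_const (C := I₀ + M)
    (f := fun σ => Real.exp (-δ * (m - σ)) *
      (Real.exp (-(ν + D) * (σ - t₀)) * I₀ +
        ∫ a in (0:ℝ)..(σ - t₀), Real.exp (-(ν + D) * a) * x (σ - a)))
    (a := t₀) (b := m) ?_
  · rw [Real.norm_eq_abs, abs_of_nonneg (by linarith : (0:ℝ) ≤ m - t₀)] at h
    exact h
  · intro σ hσ
    rw [Set.uIoc_of_le hm] at hσ
    have hσ1 : t₀ < σ := hσ.1
    have hσ2 : σ ≤ m := hσ.2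
    have hJ := J_bound ν D M hνD hM hxb (by linarith : (0:ℝ) ≤ σ - t₀) σ
    have hJ' : |∫ a in (0:ℝ)..(σ - t₀), Real.exp (-(ν + D) * a) * x (σ - a)| ≤ M := by
      refine hJ.trans ?_; nlinarith
    rw [Real.norm_eq_abs, abs_mul, abs_of_nonneg (Real.exp_nonneg _)]
    have he : Real.exp (-δ * (m - σ)) ≤ 1 := by rw [Real.exp_le_one_iff]; nlinarith
    have h1 : |Real.exp (-(ν + D) * (σ - t₀)) * I₀| ≤ I₀ := by
      rw [abs_mul, abs_of_nonneg (Real.exp_nonneg _), abs_of_nonneg hI₀]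
      have : Real.exp (-(ν + D) * (σ - t₀)) ≤ 1 := by rw [Real.exp_le_one_iff]; nlinarith
      nlinarith
    have hinner : |Real.exp (-(ν + D) * (σ - t₀)) * I₀ +
        ∫ a in (0:ℝ)..(σ - t₀), Real.exp (-(ν + D) * a) * x (σ - a)| ≤ I₀ + M := by
      refine (abs_add_le _ _).trans ?_; linarith
    calc Real.exp (-δ * (m - σ)) * |Real.exp (-(ν + D) * (σ - t₀)) * I₀ +
          ∫ a in (0:ℝ)..(σ - t₀), Real.exp (-(ν + D) * a) * x (σ - a)|
        ≤ 1 * (I₀ + M) := mul_le_mul he hinner (abs_nonneg _) one_pos.le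
      _ = I₀ + M := one_mul _

lemma Fop_bound (t₀ ν D δ S₀ R₀ I₀ T M : ℝ) (hνD : 0 ≤ ν + D) (hν : 0 ≤ ν) (hδ : 0 ≤ δ)
    (hS₀ : 0 ≤ S₀) (hR₀ : 0 ≤ R₀) (hI₀ : 0 ≤ I₀) (hM : 0 ≤ M) (hT1 : T ≤ 1)
    {x : ℝ → ℝ} (hxb : ∀ u, |x u| ≤ M) {t : ℝ} (ht : t ∈ Icc t₀ (t₀ + T)) :
    |Fop t₀ ν D δ S₀ R₀ I₀ x t| ≤ S₀ + (M + δ * (R₀ + ν * (I₀ + M))) := by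
  have ht1 := ht.1
  have ht2 := ht.2
  have h := intervalIntegral.norm_integral_le_of_norm_le_const
    (C := M + δ * (R₀ + ν * (I₀ + M)))
    (f := fun m => x m - δ * (Real.exp (-δ * (m - t₀)) * R₀ +
      ν * ∫ σ in t₀..m, Real.exp (-δ * (m - σ)) *
        (Real.exp (-(ν + D) * (σ - t₀)) * I₀ +
          ∫ a in (0:ℝ)..(σ - t₀), Real.exp (-(ν + D) * a) * x (σ - a))))
    (a := t₀) (b := t) ?_
  · rw [Real.norm_eq_abs, abs_of_nonneg (by linarith : (0:ℝ) ≤ t - t₀)] at h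
    rw [Fop]
    have hC : 0 ≤ M + δ * (R₀ + ν * (I₀ + M)) := by
      have := mul_nonneg hδ (add_nonneg hR₀ (mul_nonneg hν (add_nonneg hI₀ hM))); linarith
    refine (abs_sub _ _).trans ?_
    rw [abs_of_nonneg hS₀]
    have h2 : (M + δ * (R₀ + ν * (I₀ + M))) * (t - t₀) ≤ M + δ * (R₀ + ν * (I₀ + M)) := by
      nlinarith
    linarith
  · intro m hm
    rw [Set.uIoc_of_le ht1] at hm
    have hm1 : t₀ < m := hm.1
    have hm2 : m ≤ t₀ + T := hm.2.trans ht2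
    have hH := H_bound t₀ ν D δ I₀ M T hνD hδ hI₀ hM hT1 hxb hm1.le hm2
    have hH' : |∫ σ in t₀..m, Real.exp (-δ * (m - σ)) *
        (Real.exp (-(ν + D) * (σ - t₀)) * I₀ +
          ∫ a in (0:ℝ)..(σ - t₀), Real.exp (-(ν + D) * a) * x (σ - a))| ≤ I₀ + M := by
      refine hH.trans ?_; nlinarith
    rw [Real.norm_eq_abs]
    have hR : |Real.exp (-δ * (m - t₀)) * R₀| ≤ R₀ := by
      rw [abs_mul, abs_of_nonneg (Real.exp_nonneg _), abs_of_nonneg hR₀]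
      have : Real.exp (-δ * (m - t₀)) ≤ 1 := by rw [Real.exp_le_one_iff]; nlinarith
      nlinarith
    refine (abs_sub _ _).trans ?_
    have h2 : |δ * (Real.exp (-δ * (m - t₀)) * R₀ +
        ν * ∫ σ in t₀..m, Real.exp (-δ * (m - σ)) *
          (Real.exp (-(ν + D) * (σ - t₀)) * I₀ +
            ∫ a in (0:ℝ)..(σ - t₀), Real.exp (-(ν + D) * a) * x (σ - a)))|
        ≤ δ * (R₀ + ν * (I₀ + M)) := by
      rw [abs_mul, abs_of_nonneg hδ]
      refine mul_le_mul_of_nonneg_left ?_ hδ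
      refine (abs_add_le _ _).trans ?_
      have h3 : |ν * ∫ σ in t₀..m, Real.exp (-δ * (m - σ)) *
          (Real.exp (-(ν + D) * (σ - t₀)) * I₀ +
            ∫ a in (0:ℝ)..(σ - t₀), Real.exp (-(ν + D) * a) * x (σ - a))| ≤ ν * (I₀ + M) := by
        rw [abs_mul, abs_of_nonneg hν]
        exact mul_le_mul_of_nonneg_left hH' hν
      linarith
    linarith [hxb m]

lemma J_diff (t₀ ν D Δ : ℝ) (hνD : 0 ≤ ν + D) (hΔ : 0 ≤ Δ) {x₁ x₂ : ℝ → ℝ}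
    (hx₁ : Continuous x₁) (hx₂ : Continuous x₂) (hd : ∀ u, |x₁ u - x₂ u| ≤ Δ)
    {σ : ℝ} (hσ : t₀ ≤ σ) :
    |(∫ a in (0:ℝ)..(σ - t₀), Real.exp (-(ν + D) * a) * x₁ (σ - a)) -
      ∫ a in (0:ℝ)..(σ - t₀), Real.exp (-(ν + D) * a) * x₂ (σ - a)| ≤ Δ * (σ - t₀) := by
  have hi₁ : IntervalIntegrable (fun a => Real.exp (-(ν + D) * a) * x₁ (σ - a)) volume 0 (σ - t₀) :=
    (by fun_prop : Continuous fun a => Real.exp (-(ν + D) * a) * x₁ (σ - a)).intervalIntegrable _ _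
  have hi₂ : IntervalIntegrable (fun a => Real.exp (-(ν + D) * a) * x₂ (σ - a)) volume 0 (σ - t₀) :=
    (by fun_prop : Continuous fun a => Real.exp (-(ν + D) * a) * x₂ (σ - a)).intervalIntegrable _ _
  rw [← intervalIntegral.integral_sub hi₁ hi₂]
  have h := intervalIntegral.norm_integral_le_of_norm_le_const (C := Δ)
    (f := fun a => Real.exp (-(ν + D) * a) * x₁ (σ - a) - Real.exp (-(ν + D) * a) * x₂ (σ - a))
    (a := (0:ℝ)) (b := σ - t₀) ?_
  · rw [Real.norm_eq_abs, sub_zero, abs_of_nonneg (by linarith : (0:ℝ) ≤ σ - t₀)] at h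
    exact h
  · intro a ha
    rw [Set.uIoc_of_le (by linarith : (0:ℝ) ≤ σ - t₀)] at ha
    have : Real.exp (-(ν + D) * a) * x₁ (σ - a) - Real.exp (-(ν + D) * a) * x₂ (σ - a)
        = Real.exp (-(ν + D) * a) * (x₁ (σ - a) - x₂ (σ - a)) := by ring
    beta_reduce
    rw [Real.norm_eq_abs, this, abs_mul, abs_of_nonneg (Real.exp_nonneg _)]
    have he : Real.exp (-(ν + D) * a) ≤ 1 := by rw [Real.exp_le_one_iff]; nlinarith [ha.1]
    calc Real.exp (-(ν + D) * a) * |x₁ (σ - a) - x₂ (σ - a)| ≤ 1 * Δ :=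
          mul_le_mul he (hd _) (abs_nonneg _) one_pos.le
      _ = Δ := one_mul Δ

lemma H_diff (t₀ ν D δ I₀ Δ T : ℝ) (hνD : 0 ≤ ν + D) (hδ : 0 ≤ δ) (hΔ : 0 ≤ Δ) (hT1 : T ≤ 1)
    {x₁ x₂ : ℝ → ℝ} (hx₁ : Continuous x₁) (hx₂ : Continuous x₂)
    (hd : ∀ u, |x₁ u - x₂ u| ≤ Δ) {m : ℝ} (hm : t₀ ≤ m) (hmT : m ≤ t₀ + T) :
    |(∫ σ in t₀..m, Real.exp (-δ * (m - σ)) *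
        (Real.exp (-(ν + D) * (σ - t₀)) * I₀ +
          ∫ a in (0:ℝ)..(σ - t₀), Real.exp (-(ν + D) * a) * x₁ (σ - a))) -
      ∫ σ in t₀..m, Real.exp (-δ * (m - σ)) *
        (Real.exp (-(ν + D) * (σ - t₀)) * I₀ +
          ∫ a in (0:ℝ)..(σ - t₀), Real.exp (-(ν + D) * a) * x₂ (σ - a))| ≤ Δ * (m - t₀) := by
  have hJ₁ := J_cont t₀ ν D hx₁
  have hJ₂ := J_cont t₀ ν D hx₂
  have hi₁ : IntervalIntegrable (fun σ => Real.exp (-δ * (m - σ)) *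
      (Real.exp (-(ν + D) * (σ - t₀)) * I₀ +
        ∫ a in (0:ℝ)..(σ - t₀), Real.exp (-(ν + D) * a) * x₁ (σ - a))) volume t₀ m :=
    (by fun_prop : Continuous _).intervalIntegrable _ _
  have hi₂ : IntervalIntegrable (fun σ => Real.exp (-δ * (m - σ)) *
      (Real.exp (-(ν + D) * (σ - t₀)) * I₀ +
        ∫ a in (0:ℝ)..(σ - t₀), Real.exp (-(ν + D) * a) * x₂ (σ - a))) volume t₀ m :=
    (by fun_prop : Continuous _).intervalIntegrable _ _
  rw [← intervalIntegral.integral_sub hi₁ hi₂]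
  have h := intervalIntegral.norm_integral_le_of_norm_le_const (C := Δ)
    (f := fun σ => Real.exp (-δ * (m - σ)) *
        (Real.exp (-(ν + D) * (σ - t₀)) * I₀ +
          ∫ a in (0:ℝ)..(σ - t₀), Real.exp (-(ν + D) * a) * x₁ (σ - a)) -
      Real.exp (-δ * (m - σ)) *
        (Real.exp (-(ν + D) * (σ - t₀)) * I₀ +
          ∫ a in (0:ℝ)..(σ - t₀), Real.exp (-(ν + D) * a) * x₂ (σ - a)))
    (a := t₀) (b := m) ?_
  · rw [Real.norm_eq_abs, abs_of_nonneg (by linarith : (0:ℝ) ≤ m - t₀)] at h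
    exact h
  · intro σ hσ
    rw [Set.uIoc_of_le hm] at hσ
    have heq : Real.exp (-δ * (m - σ)) *
        (Real.exp (-(ν + D) * (σ - t₀)) * I₀ +
          ∫ a in (0:ℝ)..(σ - t₀), Real.exp (-(ν + D) * a) * x₁ (σ - a)) -
      Real.exp (-δ * (m - σ)) *
        (Real.exp (-(ν + D) * (σ - t₀)) * I₀ +
          ∫ a in (0:ℝ)..(σ - t₀), Real.exp (-(ν + D) * a) * x₂ (σ - a))
        = Real.exp (-δ * (m - σ)) *
          ((∫ a in (0:ℝ)..(σ - t₀), Real.exp (-(ν + D) * a) * x₁ (σ - a)) -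
            ∫ a in (0:ℝ)..(σ - t₀), Real.exp (-(ν + D) * a) * x₂ (σ - a)) := by ring
    beta_reduce
    rw [Real.norm_eq_abs, heq, abs_mul, abs_of_nonneg (Real.exp_nonneg _)]
    have he : Real.exp (-δ * (m - σ)) ≤ 1 := by
      rw [Real.exp_le_one_iff]; nlinarith [hσ.2]
    have hJd := J_diff t₀ ν D Δ hνD hΔ hx₁ hx₂ hd hσ.1.le
    have hJd' : |(∫ a in (0:ℝ)..(σ - t₀), Real.exp (-(ν + D) * a) * x₁ (σ - a)) -
        ∫ a in (0:ℝ)..(σ - t₀), Real.exp (-(ν + D) * a) * x₂ (σ - a)| ≤ Δ := by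
      refine hJd.trans ?_
      have h1 : σ - t₀ ≤ 1 := by linarith [hσ.2]
      nlinarith [hσ.1]
    calc Real.exp (-δ * (m - σ)) * |(∫ a in (0:ℝ)..(σ - t₀), Real.exp (-(ν + D) * a) * x₁ (σ - a)) -
          ∫ a in (0:ℝ)..(σ - t₀), Real.exp (-(ν + D) * a) * x₂ (σ - a)|
        ≤ 1 * Δ := mul_le_mul he hJd' (abs_nonneg _) one_pos.le
      _ = Δ := one_mul Δ

lemma Fop_diff (t₀ ν D δ S₀ R₀ I₀ T Δ : ℝ) (hνD : 0 ≤ ν + D) (hν : 0 ≤ ν) (hδ : 0 ≤ δ)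
    (hΔ : 0 ≤ Δ) (hT1 : T ≤ 1) {x₁ x₂ : ℝ → ℝ} (hx₁ : Continuous x₁) (hx₂ : Continuous x₂)
    (hd : ∀ u, |x₁ u - x₂ u| ≤ Δ) {t : ℝ} (ht : t ∈ Icc t₀ (t₀ + T)) :
    |Fop t₀ ν D δ S₀ R₀ I₀ x₁ t - Fop t₀ ν D δ S₀ R₀ I₀ x₂ t| ≤ (1 + δ * ν) * Δ * T := by
  have ht1 := ht.1
  have ht2 := ht.2
  have hi₁ : IntervalIntegrable (fun m => x₁ m - δ * (Real.exp (-δ * (m - t₀)) * R₀ +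
      ν * ∫ σ in t₀..m, Real.exp (-δ * (m - σ)) *
        (Real.exp (-(ν + D) * (σ - t₀)) * I₀ +
          ∫ a in (0:ℝ)..(σ - t₀), Real.exp (-(ν + D) * a) * x₁ (σ - a)))) volume t₀ t :=
    (F_parts_cont t₀ ν D δ R₀ I₀ hx₁).intervalIntegrable _ _
  have hi₂ : IntervalIntegrable (fun m => x₂ m - δ * (Real.exp (-δ * (m - t₀)) * R₀ +
      ν * ∫ σ in t₀..m, Real.exp (-δ * (m - σ)) *
        (Real.exp (-(ν + D) * (σ - t₀)) * I₀ +
          ∫ a in (0:ℝ)..(σ - t₀), Real.exp (-(ν + D) * a) * x₂ (σ - a)))) volume t₀ t :=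
    (F_parts_cont t₀ ν D δ R₀ I₀ hx₂).intervalIntegrable _ _
  have hFeq : Fop t₀ ν D δ S₀ R₀ I₀ x₁ t - Fop t₀ ν D δ S₀ R₀ I₀ x₂ t
      = -∫ m in t₀..t, ((x₁ m - δ * (Real.exp (-δ * (m - t₀)) * R₀ +
          ν * ∫ σ in t₀..m, Real.exp (-δ * (m - σ)) *
            (Real.exp (-(ν + D) * (σ - t₀)) * I₀ +
              ∫ a in (0:ℝ)..(σ - t₀), Real.exp (-(ν + D) * a) * x₁ (σ - a)))) -
        (x₂ m - δ * (Real.exp (-δ * (m - t₀)) * R₀ +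
          ν * ∫ σ in t₀..m, Real.exp (-δ * (m - σ)) *
            (Real.exp (-(ν + D) * (σ - t₀)) * I₀ +
              ∫ a in (0:ℝ)..(σ - t₀), Real.exp (-(ν + D) * a) * x₂ (σ - a))))) := by
    rw [intervalIntegral.integral_sub hi₁ hi₂, Fop, Fop]; ring
  rw [hFeq, abs_neg]
  have h := intervalIntegral.norm_integral_le_of_norm_le_const (C := (1 + δ * ν) * Δ)
    (f := fun m => (x₁ m - δ * (Real.exp (-δ * (m - t₀)) * R₀ +
          ν * ∫ σ in t₀..m, Real.exp (-δ * (m - σ)) *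
            (Real.exp (-(ν + D) * (σ - t₀)) * I₀ +
              ∫ a in (0:ℝ)..(σ - t₀), Real.exp (-(ν + D) * a) * x₁ (σ - a)))) -
        (x₂ m - δ * (Real.exp (-δ * (m - t₀)) * R₀ +
          ν * ∫ σ in t₀..m, Real.exp (-δ * (m - σ)) *
            (Real.exp (-(ν + D) * (σ - t₀)) * I₀ +
              ∫ a in (0:ℝ)..(σ - t₀), Real.exp (-(ν + D) * a) * x₂ (σ - a)))))
    (a := t₀) (b := t) ?_
  · rw [Real.norm_eq_abs, abs_of_nonneg (by linarith : (0:ℝ) ≤ t - t₀)] at h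
    refine h.trans ?_
    have hC : 0 ≤ (1 + δ * ν) * Δ := by
      have := mul_nonneg hδ hν; nlinarith
    nlinarith
  · intro m hm
    rw [Set.uIoc_of_le ht1] at hm
    have hm1 : t₀ < m := hm.1
    have hm2 : m ≤ t₀ + T := hm.2.trans ht2
    have hHd := H_diff t₀ ν D δ I₀ Δ T hνD hδ hΔ hT1 hx₁ hx₂ hd hm1.le hm2
    have hHd' : |(∫ σ in t₀..m, Real.exp (-δ * (m - σ)) *
        (Real.exp (-(ν + D) * (σ - t₀)) * I₀ +
          ∫ a in (0:ℝ)..(σ - t₀), Real.exp (-(ν + D) * a) * x₁ (σ - a))) -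
      ∫ σ in t₀..m, Real.exp (-δ * (m - σ)) *
        (Real.exp (-(ν + D) * (σ - t₀)) * I₀ +
          ∫ a in (0:ℝ)..(σ - t₀), Real.exp (-(ν + D) * a) * x₂ (σ - a))| ≤ Δ := by
      refine hHd.trans ?_
      have : m - t₀ ≤ 1 := by linarith
      nlinarith
    beta_reduce
    rw [Real.norm_eq_abs]
    have heq : (x₁ m - δ * (Real.exp (-δ * (m - t₀)) * R₀ +
          ν * ∫ σ in t₀..m, Real.exp (-δ * (m - σ)) *
            (Real.exp (-(ν + D) * (σ - t₀)) * I₀ +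
              ∫ a in (0:ℝ)..(σ - t₀), Real.exp (-(ν + D) * a) * x₁ (σ - a)))) -
        (x₂ m - δ * (Real.exp (-δ * (m - t₀)) * R₀ +
          ν * ∫ σ in t₀..m, Real.exp (-δ * (m - σ)) *
            (Real.exp (-(ν + D) * (σ - t₀)) * I₀ +
              ∫ a in (0:ℝ)..(σ - t₀), Real.exp (-(ν + D) * a) * x₂ (σ - a))))
        = (x₁ m - x₂ m) - δ * ν *
          ((∫ σ in t₀..m, Real.exp (-δ * (m - σ)) *
            (Real.exp (-(ν + D) * (σ - t₀)) * I₀ +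
              ∫ a in (0:ℝ)..(σ - t₀), Real.exp (-(ν + D) * a) * x₁ (σ - a))) -
          ∫ σ in t₀..m, Real.exp (-δ * (m - σ)) *
            (Real.exp (-(ν + D) * (σ - t₀)) * I₀ +
              ∫ a in (0:ℝ)..(σ - t₀), Real.exp (-(ν + D) * a) * x₂ (σ - a))) := by ring
    rw [heq]
    refine (abs_sub _ _).trans ?_
    have h3 : |δ * ν * ((∫ σ in t₀..m, Real.exp (-δ * (m - σ)) *
        (Real.exp (-(ν + D) * (σ - t₀)) * I₀ +
          ∫ a in (0:ℝ)..(σ - t₀), Real.exp (-(ν + D) * a) * x₁ (σ - a))) -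
      ∫ σ in t₀..m, Real.exp (-δ * (m - σ)) *
        (Real.exp (-(ν + D) * (σ - t₀)) * I₀ +
          ∫ a in (0:ℝ)..(σ - t₀), Real.exp (-(ν + D) * a) * x₂ (σ - a)))| ≤ δ * ν * Δ := by
      rw [abs_mul, abs_of_nonneg (mul_nonneg hδ hν)]
      exact mul_le_mul_of_nonneg_left hHd' (mul_nonneg hδ hν)
    have h4 := hd m
    nlinarith

lemma Fop_congr (t₀ ν D δ S₀ R₀ I₀ T : ℝ) {x y : ℝ → ℝ}
    (hxy : ∀ u ∈ Icc t₀ (t₀ + T), x u = y u) {t : ℝ} (ht : t ∈ Icc t₀ (t₀ + T)) :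
    Fop t₀ ν D δ S₀ R₀ I₀ x t = Fop t₀ ν D δ S₀ R₀ I₀ y t := by
  rw [Fop, Fop]
  congr 1
  apply intervalIntegral.integral_congr
  intro m hm
  rw [uIcc_of_le ht.1] at hm
  have hmT : m ≤ t₀ + T := hm.2.trans ht.2
  have hinner : (∫ σ in t₀..m, Real.exp (-δ * (m - σ)) *
      (Real.exp (-(ν + D) * (σ - t₀)) * I₀ +
        ∫ a in (0:ℝ)..(σ - t₀), Real.exp (-(ν + D) * a) * x (σ - a)))
      = ∫ σ in t₀..m, Real.exp (-δ * (m - σ)) *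
      (Real.exp (-(ν + D) * (σ - t₀)) * I₀ +
        ∫ a in (0:ℝ)..(σ - t₀), Real.exp (-(ν + D) * a) * y (σ - a)) := by
    apply intervalIntegral.integral_congr
    intro σ hσ
    rw [uIcc_of_le hm.1] at hσ
    have hJeq : (∫ a in (0:ℝ)..(σ - t₀), Real.exp (-(ν + D) * a) * x (σ - a))
        = ∫ a in (0:ℝ)..(σ - t₀), Real.exp (-(ν + D) * a) * y (σ - a) := by
      apply intervalIntegral.integral_congr
      intro a ha
      rw [uIcc_of_le (by linarith [hσ.1] : (0:ℝ) ≤ σ - t₀)] at ha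
      simp only
      rw [hxy (σ - a) ⟨by linarith [ha.2], by linarith [ha.1, hσ.2, hmT]⟩]
    simp only
    rw [hJeq]
  simp only
  rw [hxy m ⟨hm.1, hmT⟩, hinner]

lemma Gam_congr (t₀ ν D T : ℝ) (β : ℝ → ℝ) {x y : ℝ → ℝ}
    (hxy : ∀ u ∈ Icc t₀ (t₀ + T), x u = y u) {t : ℝ} (ht : t ∈ Icc t₀ (t₀ + T)) :
    (∫ a in (0:ℝ)..(t - t₀), Gam ν D β a * x (t - a))
      = ∫ a in (0:ℝ)..(t - t₀), Gam ν D β a * y (t - a) := by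
  apply intervalIntegral.integral_congr
  intro a ha
  rw [uIcc_of_le (by linarith [ht.1] : (0:ℝ) ≤ t - t₀)] at ha
  simp only
  rw [hxy (t - a) ⟨by linarith [ha.2, ht.1], by linarith [ha.1, ht.2]⟩]

lemma Gam_cont (ν D : ℝ) {β : ℝ → ℝ} (hβ_cont : ContinuousOn β (Ici 0)) :
    ContinuousOn (Gam ν D β) (Ici 0) :=
  ((Real.continuous_exp.comp (continuous_const.mul continuous_id)).continuousOn).mul hβ_cont

lemma Gam_int_bound (t₀ ν D M T : ℝ) {β : ℝ → ℝ} (hνD : 0 ≤ ν + D)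
    (hβ_mem : ∀ a, 0 ≤ a → β a ∈ Icc (0:ℝ) 1) (hM : 0 ≤ M) (hT1 : T ≤ 1)
    {x : ℝ → ℝ} (hxb : ∀ u, |x u| ≤ M) {t : ℝ} (ht : t ∈ Icc t₀ (t₀ + T)) :
    |∫ a in (0:ℝ)..(t - t₀), Gam ν D β a * x (t - a)| ≤ M := by
  have ht1 := ht.1
  have ht2 := ht.2
  have h := intervalIntegral.norm_integral_le_of_norm_le_const (C := M)
    (f := fun a => Gam ν D β a * x (t - a)) (a := (0:ℝ)) (b := t - t₀) ?_
  · rw [Real.norm_eq_abs, sub_zero, abs_of_nonneg (by linarith : (0:ℝ) ≤ t - t₀)] at h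
    refine h.trans ?_
    nlinarith
  · intro a ha
    rw [Set.uIoc_of_le (by linarith : (0:ℝ) ≤ t - t₀)] at ha
    have hβ := hβ_mem a ha.1.le
    have hGam : |Gam ν D β a| ≤ 1 := by
      rw [Gam, abs_mul, abs_of_nonneg (Real.exp_nonneg _), abs_of_nonneg hβ.1]
      have he : Real.exp (-(ν + D) * a) ≤ 1 := by
        rw [Real.exp_le_one_iff]; nlinarith [ha.1]
      nlinarith [hβ.2, Real.exp_nonneg (-(ν + D) * a)]
    rw [Real.norm_eq_abs, abs_mul]
    calc |Gam ν D β a| * |x (t - a)| ≤ 1 * M :=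
          mul_le_mul hGam (hxb _) (abs_nonneg _) one_pos.le
      _ = M := one_mul M

lemma Gam_int_diff (t₀ ν D Δ T : ℝ) {β : ℝ → ℝ} (hνD : 0 ≤ ν + D)
    (hβ_cont : ContinuousOn β (Ici 0)) (hβ_mem : ∀ a, 0 ≤ a → β a ∈ Icc (0:ℝ) 1)
    (hΔ : 0 ≤ Δ) {x₁ x₂ : ℝ → ℝ} (hx₁ : Continuous x₁) (hx₂ : Continuous x₂)
    (hd : ∀ u, |x₁ u - x₂ u| ≤ Δ) {t : ℝ} (ht : t ∈ Icc t₀ (t₀ + T)) :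
    |(∫ a in (0:ℝ)..(t - t₀), Gam ν D β a * x₁ (t - a)) -
      ∫ a in (0:ℝ)..(t - t₀), Gam ν D β a * x₂ (t - a)| ≤ Δ * T := by
  have ht1 := ht.1
  have ht2 := ht.2
  have hs : (0:ℝ) ≤ t - t₀ := by linarith
  have hsub : uIcc (0:ℝ) (t - t₀) ⊆ Ici 0 := by
    rw [uIcc_of_le hs]; exact fun u hu => hu.1
  have hi₁ : IntervalIntegrable (fun a => Gam ν D β a * x₁ (t - a)) volume 0 (t - t₀) :=
    (((Gam_cont ν D hβ_cont).mono hsub).mul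
      ((hx₁.comp (continuous_const.sub continuous_id)).continuousOn)).intervalIntegrable
  have hi₂ : IntervalIntegrable (fun a => Gam ν D β a * x₂ (t - a)) volume 0 (t - t₀) :=
    (((Gam_cont ν D hβ_cont).mono hsub).mul
      ((hx₂.comp (continuous_const.sub continuous_id)).continuousOn)).intervalIntegrable
  rw [← intervalIntegral.integral_sub hi₁ hi₂]
  have h := intervalIntegral.norm_integral_le_of_norm_le_const (C := Δ)
    (f := fun a => Gam ν D β a * x₁ (t - a) - Gam ν D β a * x₂ (t - a))
    (a := (0:ℝ)) (b := t - t₀) ?_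
  · rw [Real.norm_eq_abs, sub_zero, abs_of_nonneg hs] at h
    refine h.trans ?_
    nlinarith
  · intro a ha
    rw [Set.uIoc_of_le hs] at ha
    have hβ := hβ_mem a ha.1.le
    have hGam : |Gam ν D β a| ≤ 1 := by
      rw [Gam, abs_mul, abs_of_nonneg (Real.exp_nonneg _), abs_of_nonneg hβ.1]
      have he : Real.exp (-(ν + D) * a) ≤ 1 := by
        rw [Real.exp_le_one_iff]; nlinarith [ha.1]
      nlinarith [hβ.2, Real.exp_nonneg (-(ν + D) * a)]
    beta_reduce
    rw [Real.norm_eq_abs, ← mul_sub, abs_mul]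
    calc |Gam ν D β a| * |x₁ (t - a) - x₂ (t - a)| ≤ 1 * Δ :=
          mul_le_mul hGam (hd _) (abs_nonneg _) one_pos.le
      _ = Δ := one_mul Δ

set_option maxHeartbeats 1000000 in
/-- there exists `T > 0` such that any family `N_κ` of continuous solutions
of the mollified Volterra equations, bounded by `2 τ_max S₀ I₀`, is uniformly Cauchy on
`[t₀, t₀+T]` as `κ → ∞`. -/
theorem mollified_solutions_uniformly_cauchy
    (t₀ ν D δ S₀ R₀ I₀ τmax : ℝ)
    (hν : 0 < ν) (hD : 0 ≤ D) (hδ : 0 ≤ δ)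
    (hS₀ : 0 < S₀) (hR₀ : 0 ≤ R₀) (hI₀ : 0 < I₀) (hτmax : 0 < τmax)
    (τ : ℝ → ℝ) (hτ_cont : ContinuousOn τ (Ici t₀))
    (hτ_nonneg : ∀ t ∈ Ici t₀, 0 ≤ τ t)
    (hτ_bdd : ∀ t ∈ Ici t₀, τ t ≤ τmax)
    (β : ℝ → ℝ) (hβ_cont : ContinuousOn β (Ici 0))
    (hβ_mem : ∀ a, 0 ≤ a → β a ∈ Icc (0 : ℝ) 1)
    (p : ℝ → ℝ) (hp_nonneg : ∀ a, 0 ≤ a → 0 ≤ p a)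
    (hp_int : IntegrableOn p (Ioi 0))
    (hp_one : ∫ a in Ioi (0 : ℝ), p a = 1) :
    ∃ T : ℝ, 0 < T ∧
      ∀ N : ℝ → ℝ → ℝ,
        (∀ κ : ℝ, 0 < κ →
          ContinuousOn (N κ) (Icc t₀ (t₀ + T)) ∧
          (∀ t ∈ Icc t₀ (t₀ + T), |N κ t| ≤ 2 * τmax * S₀ * I₀) ∧
          (∀ t ∈ Icc t₀ (t₀ + T),
            N κ t = τ t * Fop t₀ ν D δ S₀ R₀ I₀ (N κ) t *
              (Lam t₀ ν D I₀ β p κ t +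
                ∫ a in (0 : ℝ)..(t - t₀), Gam ν D β a * N κ (t - a)))) →
        ∀ ε : ℝ, 0 < ε → ∃ K : ℝ, 0 < K ∧
          ∀ κ₁ κ₂ : ℝ, K < κ₁ → K < κ₂ →
            ∀ t ∈ Icc t₀ (t₀ + T), |N κ₁ t - N κ₂ t| ≤ ε := by
  have hM0 : (0:ℝ) < 2 * τmax * S₀ * I₀ := by
    have := mul_pos (mul_pos (mul_pos (by norm_num : (0:ℝ) < 2) hτmax) hS₀) hI₀
    linarith [this]
  set M := 2 * τmax * S₀ * I₀ with hMdef
  have hCF : 0 < S₀ + (M + δ * (R₀ + ν * (I₀ + M))) := by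
    have h1 : 0 ≤ δ * (R₀ + ν * (I₀ + M)) :=
      mul_nonneg hδ (add_nonneg hR₀ (mul_nonneg hν.le (add_nonneg hI₀.le hM0.le)))
    linarith
  set CF := S₀ + (M + δ * (R₀ + ν * (I₀ + M))) with hCFdef
  have hA : 0 < τmax * ((1 + δ * ν) * (I₀ + M) + CF) := by
    have h1 : 0 ≤ δ * ν := mul_nonneg hδ hν.le
    have h2 : 0 < (1 + δ * ν) * (I₀ + M) := by nlinarith
    nlinarith
  set A := τmax * ((1 + δ * ν) * (I₀ + M) + CF) with hAdef
  have hT : 0 < min 1 (1 / (2 * A)) := lt_min one_pos (by positivity)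
  refine ⟨min 1 (1 / (2 * A)), hT, ?_⟩
  set T := min 1 (1 / (2 * A)) with hTdef
  have hT1 : T ≤ 1 := min_le_left _ _
  have hAT : A * T ≤ 1 / 2 := by
    have h2 : T ≤ 1 / (2 * A) := min_le_right _ _
    calc A * T ≤ A * (1 / (2 * A)) := mul_le_mul_of_nonneg_left h2 hA.le
      _ = 1 / 2 := by field_simp
  clear_value M CF A T
  intro N hN ε hε
  have hνD : 0 ≤ ν + D := by linarith
  have hden : 0 < 4 * τmax * CF := by positivity
  obtain ⟨K, hK1, hKprop⟩ := lam_approx t₀ ν D I₀ hνD hI₀ β hβ_cont hβ_mem p hp_nonneg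
    hp_int hp_one T hT (ε / (4 * τmax * CF)) (div_pos hε hden)
  refine ⟨K, by linarith, ?_⟩
  intro κ₁ κ₂ hκ₁ hκ₂
  have hκ₁0 : 0 < κ₁ := by linarith
  have hκ₂0 : 0 < κ₂ := by linarith
  obtain ⟨hc₁, hb₁, he₁⟩ := hN κ₁ hκ₁0
  obtain ⟨hc₂, hb₂, he₂⟩ := hN κ₂ hκ₂0
  have htt : t₀ ≤ t₀ + T := by linarith
  set proj : ℝ → ℝ := fun u => max t₀ (min u (t₀ + T)) with hprojdef
  have hproj_mem : ∀ u, proj u ∈ Icc t₀ (t₀ + T) := fun u =>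
    ⟨le_max_left _ _, max_le htt (min_le_right _ _)⟩
  have hproj_id : ∀ u ∈ Icc t₀ (t₀ + T), proj u = u := fun u hu => by
    simp only [hprojdef]
    rw [min_eq_left hu.2, max_eq_right hu.1]
  have hproj_cont : Continuous proj := continuous_const.max (continuous_id.min continuous_const)
  set x₁ : ℝ → ℝ := fun u => N κ₁ (proj u) with hx₁def
  set x₂ : ℝ → ℝ := fun u => N κ₂ (proj u) with hx₂def
  have hx₁c : Continuous x₁ := hc₁.comp_continuous hproj_cont hproj_mem
  have hx₂c : Continuous x₂ := hc₂.comp_continuous hproj_cont hproj_mem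
  have hx₁eq : ∀ u ∈ Icc t₀ (t₀ + T), x₁ u = N κ₁ u := fun u hu => by
    simp only [hx₁def]; rw [hproj_id u hu]
  have hx₂eq : ∀ u ∈ Icc t₀ (t₀ + T), x₂ u = N κ₂ u := fun u hu => by
    simp only [hx₂def]; rw [hproj_id u hu]
  have hx₁b : ∀ u, |x₁ u| ≤ M := fun u => hb₁ _ (hproj_mem u)
  have hx₂b : ∀ u, |x₂ u| ≤ M := fun u => hb₂ _ (hproj_mem u)
  obtain ⟨ts, hts, hmax⟩ := isCompact_Icc.exists_isMaxOn ⟨t₀, left_mem_Icc.2 htt⟩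
    (((hx₁c.sub hx₂c).abs.continuousOn) : ContinuousOn (fun u => |x₁ u - x₂ u|) (Icc t₀ (t₀ + T)))
  set Δ := |x₁ ts - x₂ ts| with hΔdef
  have hΔ0 : 0 ≤ Δ := abs_nonneg _
  have hdglob : ∀ u, |x₁ u - x₂ u| ≤ Δ := fun u => by
    have h1 : x₁ u = x₁ (proj u) := by
      simp only [hx₁def]; rw [hproj_id (proj u) (hproj_mem u)]
    have h2 : x₂ u = x₂ (proj u) := by
      simp only [hx₂def]; rw [hproj_id (proj u) (hproj_mem u)]
    rw [h1, h2]
    exact hmax (hproj_mem u)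
  have hest : ∀ t ∈ Icc t₀ (t₀ + T), |N κ₁ t - N κ₂ t| ≤ A * T * Δ + ε / 2 := by
    intro t ht
    have htI : t ∈ Ici t₀ := ht.1
    have heq₁ : N κ₁ t = τ t * Fop t₀ ν D δ S₀ R₀ I₀ x₁ t *
        (Lam t₀ ν D I₀ β p κ₁ t + ∫ a in (0:ℝ)..(t - t₀), Gam ν D β a * x₁ (t - a)) := by
      rw [he₁ t ht, Fop_congr t₀ ν D δ S₀ R₀ I₀ T (fun u hu => (hx₁eq u hu).symm) ht,
        Gam_congr t₀ ν D T β (fun u hu => (hx₁eq u hu).symm) ht]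
    have heq₂ : N κ₂ t = τ t * Fop t₀ ν D δ S₀ R₀ I₀ x₂ t *
        (Lam t₀ ν D I₀ β p κ₂ t + ∫ a in (0:ℝ)..(t - t₀), Gam ν D β a * x₂ (t - a)) := by
      rw [he₂ t ht, Fop_congr t₀ ν D δ S₀ R₀ I₀ T (fun u hu => (hx₂eq u hu).symm) ht,
        Gam_congr t₀ ν D T β (fun u hu => (hx₂eq u hu).symm) ht]
    have hF₁b : |Fop t₀ ν D δ S₀ R₀ I₀ x₁ t| ≤ CF := by
      rw [hCFdef]
      exact Fop_bound t₀ ν D δ S₀ R₀ I₀ T M hνD hν.le hδ hS₀.le hR₀ hI₀.le hM0.le hT1 hx₁b ht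
    have hF₂b : |Fop t₀ ν D δ S₀ R₀ I₀ x₂ t| ≤ CF := by
      rw [hCFdef]
      exact Fop_bound t₀ ν D δ S₀ R₀ I₀ T M hνD hν.le hδ hS₀.le hR₀ hI₀.le hM0.le hT1 hx₂b ht
    have hFd := Fop_diff t₀ ν D δ S₀ R₀ I₀ T Δ hνD hν.le hδ hΔ0 hT1 hx₁c hx₂c hdglob ht
    have hG₁b := Gam_int_bound t₀ ν D M T hνD hβ_mem hM0.le hT1 hx₁b ht
    have hGd := Gam_int_diff t₀ ν D Δ T hνD hβ_cont hβ_mem hΔ0 hx₁c hx₂c hdglob ht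
    have hL₁ := lam_bound t₀ ν D I₀ hνD hI₀.le β hβ_cont hβ_mem p hp_nonneg hp_int hp_one
      hκ₁0 ht.1
    have hLd : |Lam t₀ ν D I₀ β p κ₁ t - Lam t₀ ν D I₀ β p κ₂ t|
        ≤ 2 * (ε / (4 * τmax * CF)) := by
      have h1 := hKprop κ₁ hκ₁ t ht
      have h2 := hKprop κ₂ hκ₂ t ht
      have h3 := abs_sub_le (Lam t₀ ν D I₀ β p κ₁ t)
        (I₀ * Real.exp (-(ν + D) * (t - t₀)) * β (t - t₀)) (Lam t₀ ν D I₀ β p κ₂ t)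
      have h4 : |I₀ * Real.exp (-(ν + D) * (t - t₀)) * β (t - t₀) - Lam t₀ ν D I₀ β p κ₂ t|
          = |Lam t₀ ν D I₀ β p κ₂ t - I₀ * Real.exp (-(ν + D) * (t - t₀)) * β (t - t₀)| :=
        abs_sub_comm _ _
      linarith
    rw [heq₁, heq₂]
    have hτb : |τ t| ≤ τmax := by
      rw [abs_of_nonneg (hτ_nonneg t htI)]; exact hτ_bdd t htI
    have hC1 : 0 ≤ (1 + δ * ν) * Δ * T := by
      have h1 : 0 ≤ δ * ν := mul_nonneg hδ hν.le
      exact mul_nonneg (mul_nonneg (by linarith) hΔ0) hT.le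
    have hkey : τ t * Fop t₀ ν D δ S₀ R₀ I₀ x₁ t *
        (Lam t₀ ν D I₀ β p κ₁ t + ∫ a in (0:ℝ)..(t - t₀), Gam ν D β a * x₁ (t - a)) -
        τ t * Fop t₀ ν D δ S₀ R₀ I₀ x₂ t *
        (Lam t₀ ν D I₀ β p κ₂ t + ∫ a in (0:ℝ)..(t - t₀), Gam ν D β a * x₂ (t - a))
        = τ t * ((Fop t₀ ν D δ S₀ R₀ I₀ x₁ t - Fop t₀ ν D δ S₀ R₀ I₀ x₂ t) *
            (Lam t₀ ν D I₀ β p κ₁ t + ∫ a in (0:ℝ)..(t - t₀), Gam ν D β a * x₁ (t - a)) +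
          Fop t₀ ν D δ S₀ R₀ I₀ x₂ t *
            ((Lam t₀ ν D I₀ β p κ₁ t - Lam t₀ ν D I₀ β p κ₂ t) +
              ((∫ a in (0:ℝ)..(t - t₀), Gam ν D β a * x₁ (t - a)) -
                ∫ a in (0:ℝ)..(t - t₀), Gam ν D β a * x₂ (t - a)))) := by ring
    rw [hkey, abs_mul]
    have e1 : |(Fop t₀ ν D δ S₀ R₀ I₀ x₁ t - Fop t₀ ν D δ S₀ R₀ I₀ x₂ t) *
        (Lam t₀ ν D I₀ β p κ₁ t + ∫ a in (0:ℝ)..(t - t₀), Gam ν D β a * x₁ (t - a))|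
        ≤ ((1 + δ * ν) * Δ * T) * (I₀ + M) := by
      rw [abs_mul]
      refine mul_le_mul hFd ((abs_add_le _ _).trans (add_le_add hL₁ hG₁b)) (abs_nonneg _) hC1
    have e2 : |Fop t₀ ν D δ S₀ R₀ I₀ x₂ t *
        ((Lam t₀ ν D I₀ β p κ₁ t - Lam t₀ ν D I₀ β p κ₂ t) +
          ((∫ a in (0:ℝ)..(t - t₀), Gam ν D β a * x₁ (t - a)) -
            ∫ a in (0:ℝ)..(t - t₀), Gam ν D β a * x₂ (t - a)))|
        ≤ CF * (2 * (ε / (4 * τmax * CF)) + Δ * T) := by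
      rw [abs_mul]
      refine mul_le_mul hF₂b ((abs_add_le _ _).trans (add_le_add hLd hGd)) (abs_nonneg _) hCF.le
    have hbig := (abs_add_le _ _).trans (add_le_add e1 e2)
    calc |τ t| * |(Fop t₀ ν D δ S₀ R₀ I₀ x₁ t - Fop t₀ ν D δ S₀ R₀ I₀ x₂ t) *
          (Lam t₀ ν D I₀ β p κ₁ t + ∫ a in (0:ℝ)..(t - t₀), Gam ν D β a * x₁ (t - a)) +
        Fop t₀ ν D δ S₀ R₀ I₀ x₂ t *
          ((Lam t₀ ν D I₀ β p κ₁ t - Lam t₀ ν D I₀ β p κ₂ t) +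
            ((∫ a in (0:ℝ)..(t - t₀), Gam ν D β a * x₁ (t - a)) -
              ∫ a in (0:ℝ)..(t - t₀), Gam ν D β a * x₂ (t - a)))|
        ≤ τmax * (((1 + δ * ν) * Δ * T) * (I₀ + M) +
            CF * (2 * (ε / (4 * τmax * CF)) + Δ * T)) := by
          refine mul_le_mul hτb hbig (abs_nonneg _) hτmax.le
      _ = A * T * Δ + τmax * CF * (2 * (ε / (4 * τmax * CF))) := by rw [hAdef]; ring
      _ = A * T * Δ + ε / 2 := by
          congr 1
          rw [mul_comm (4 * τmax) CF]
          field_simp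
          ring
  have hΔle : Δ ≤ ε := by
    have h := hest ts hts
    rw [← hx₁eq ts hts, ← hx₂eq ts hts] at h
    have h2 : A * T * Δ ≤ (1 / 2) * Δ := by
      have := mul_le_mul_of_nonneg_right hAT hΔ0
      linarith
    rw [← hΔdef] at h
    linarith
  intro t ht
  calc |N κ₁ t - N κ₂ t| = |x₁ t - x₂ t| := by rw [hx₁eq t ht, hx₂eq t ht]
    _ ≤ Δ := hmax ht
    _ ≤ ε := hΔle
end
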